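/- arXiv:1510.07987 — 4 statements merged into one kernel-verified Lean document; each statement's English description precedes it below -/
import Mathlib

section
/- Let P be the subgroup of upper triangular matrices in G = SL_n(ℝ) for n ≥ 2. Then the modular homomorphism Δ_P : P → ℝ*₊ is surjective. -/
open Matrix MeasureTheory

/-- The subgroup of upper triangular matrices in `SL_n(ℝ)`. -/
noncomputable def upperTriangularSL (n : ℕ) : Subgroup (Matrix.SpecialLinearGroup (Fin n) ℝ) where
  carrier := {A | Matrix.BlockTriangular (A : Matrix (Fin n) (Fin n) ℝ) id}
  one_mem' := by
    simpa using Matrix.blockTriangular_one (α := Fin n) (R := ℝ) (b := id)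
  mul_mem' := by
    intro A B hA hB
    simpa [Matrix.SpecialLinearGroup.coe_mul] using Matrix.BlockTriangular.mul hA hB
  inv_mem' := by
    intro A hA
    have hdet : IsUnit ((A : Matrix (Fin n) (Fin n) ℝ).det) := by
      rw [A.prop]; exact isUnit_one
    have : Invertible (A : Matrix (Fin n) (Fin n) ℝ) := (A : Matrix (Fin n) (Fin n) ℝ).invertibleOfIsUnitDet hdet
    have h := Matrix.blockTriangular_inv_of_blockTriangular (M := (A : Matrix (Fin n) (Fin n) ℝ)) hA
    have hco : ((A⁻¹ : Matrix.SpecialLinearGroup (Fin n) ℝ) : Matrix (Fin n) (Fin n) ℝ)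
        = (A : Matrix (Fin n) (Fin n) ℝ)⁻¹ := by
      rw [Matrix.SpecialLinearGroup.coe_inv, Matrix.inv_def, A.prop]
      simp
    show Matrix.BlockTriangular _ id
    rw [hco]
    exact h


noncomputable instance (n : ℕ) : MeasurableSpace (Matrix (Fin n) (Fin n) ℝ) :=
  (inferInstance : MeasurableSpace (Fin n → Fin n → ℝ))

noncomputable instance (n : ℕ) : MeasurableSpace (Matrix.SpecialLinearGroup (Fin n) ℝ) :=
  (inferInstance : MeasurableSpace {A : Matrix (Fin n) (Fin n) ℝ // A.det = 1})

namespace ModularAux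

/-- Coercion of an element of the upper triangular subgroup to a matrix. -/
noncomputable def cm {n : ℕ} (p : upperTriangularSL n) : Matrix (Fin n) (Fin n) ℝ :=
  ((p : Matrix.SpecialLinearGroup (Fin n) ℝ) : Matrix (Fin n) (Fin n) ℝ)

lemma cm_mul {n : ℕ} (p q : upperTriangularSL n) : cm (p * q) = cm p * cm q := rfl

lemma cm_tri {n : ℕ} (p : upperTriangularSL n) : (cm p).BlockTriangular id := p.2

lemma cm_det {n : ℕ} (p : upperTriangularSL n) : (cm p).det = 1 := (p : Matrix.SpecialLinearGroup (Fin n) ℝ).2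

lemma cm_injective {n : ℕ} : Function.Injective (cm (n := n)) := by
  intro p q h
  exact Subtype.ext (Subtype.ext h)

variable {m : ℕ}

/-- last index -/
def LL (m : ℕ) : Fin (m + 2) := Fin.last (m + 1)

lemma ne_LL_lt {j : Fin (m+2)} (h : j ≠ LL m) : j < LL m :=
  lt_of_le_of_ne (Fin.le_last j) h

lemma cm_last_row (p : upperTriangularSL (m+2)) {j : Fin (m+2)} (h : j ≠ LL m) :
    cm p (LL m) j = 0 :=
  cm_tri p (ne_LL_lt h)

lemma cm_diag_ne_zero (p : upperTriangularSL (m+2)) (i : Fin (m+2)) : cm p i i ≠ 0 := by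
  intro h0
  have hdet : ∏ k, cm p k k = 1 := by
    rw [← Matrix.det_of_upperTriangular (cm_tri p)]; exact cm_det p
  have hz : (∏ k, cm p k k) = 0 := Finset.prod_eq_zero (Finset.mem_univ i) h0
  rw [hz] at hdet
  exact zero_ne_one hdet

/-- strictly upper part supported on last column -/
def NN (y : Fin (m+1) → ℝ) : Matrix (Fin (m+2)) (Fin (m+2)) ℝ :=
  fun i j => if h : i ≠ LL m ∧ j = LL m then y (i.castPred h.1) else 0

lemma NN_apply (y : Fin (m+1) → ℝ) (i j : Fin (m+2)) :
    NN y i j = if h : i ≠ LL m ∧ j = LL m then y (i.castPred h.1) else 0 := rfl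

lemma NN_add (y z : Fin (m+1) → ℝ) : NN y + NN z = NN (y + z) := by
  ext i j
  simp only [Matrix.add_apply, NN_apply]
  by_cases h : i ≠ LL m ∧ j = LL m
  · simp [h]
  · simp [h]

lemma NN_mul_apply (y : Fin (m+1) → ℝ) (A : Matrix (Fin (m+2)) (Fin (m+2)) ℝ) (i j : Fin (m+2)) :
    (NN y * A) i j = if h : i ≠ LL m then y (i.castPred h) * A (LL m) j else 0 := by
  rw [Matrix.mul_apply]
  by_cases h : i ≠ LL m
  · rw [dif_pos h]
    rw [Finset.sum_eq_single (LL m)]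
    · rw [NN_apply, dif_pos ⟨h, rfl⟩]
    · intro k _ hk
      rw [NN_apply, dif_neg (by tauto), zero_mul]
    · intro hk; exact absurd (Finset.mem_univ _) hk
  · rw [dif_neg h]
    apply Finset.sum_eq_zero
    intro k _
    rw [NN_apply, dif_neg (by tauto), zero_mul]

lemma NN_mul_NN (y z : Fin (m+1) → ℝ) : NN y * NN z = 0 := by
  ext i j
  rw [NN_mul_apply]
  by_cases h : i ≠ LL m
  · rw [dif_pos h, NN_apply, dif_neg (by tauto), mul_zero]; rfl
  · rw [dif_neg h]; rfl

/-- elementary unipotent matrices: identity plus last column -/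
def uu (y : Fin (m+1) → ℝ) : Matrix (Fin (m+2)) (Fin (m+2)) ℝ := 1 + NN y

lemma uu_mul_apply (y : Fin (m+1) → ℝ) (A : Matrix (Fin (m+2)) (Fin (m+2)) ℝ) (i j : Fin (m+2)) :
    (uu y * A) i j = A i j + (if h : i ≠ LL m then y (i.castPred h) * A (LL m) j else 0) := by
  rw [uu, add_mul, one_mul, Matrix.add_apply, NN_mul_apply]

lemma uu_mul_uu (y z : Fin (m+1) → ℝ) : uu y * uu z = uu (y + z) := by
  rw [uu, uu, uu, add_mul, one_mul, mul_add, mul_one, NN_mul_NN, ← NN_add]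
  abel

lemma NN_zero : NN (0 : Fin (m+1) → ℝ) = 0 := by
  ext i j
  rw [NN_apply]
  by_cases h : i ≠ LL m ∧ j = LL m
  · simp [h]
  · simp [h]

lemma uu_zero : uu (0 : Fin (m+1) → ℝ) = 1 := by
  rw [uu, NN_zero, add_zero]

lemma uu_blockTriangular (y : Fin (m+1) → ℝ) : (uu y).BlockTriangular id := by
  intro i j hij
  have hij' : j < i := hij
  have hiL : ¬(i ≠ LL m ∧ j = LL m) := by
    rintro ⟨-, rfl⟩
    exact absurd hij' (not_lt.2 (Fin.le_last i))
  rw [uu, Matrix.add_apply, NN_apply, dif_neg hiL, Matrix.one_apply_ne (ne_of_gt hij'), add_zero]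

lemma uu_diag (y : Fin (m+1) → ℝ) (i : Fin (m+2)) : uu y i i = 1 := by
  have : ¬(i ≠ LL m ∧ i = LL m) := by tauto
  rw [uu, Matrix.add_apply, NN_apply, dif_neg this, Matrix.one_apply_eq, add_zero]

lemma det_uu (y : Fin (m+1) → ℝ) : (uu y).det = 1 := by
  rw [Matrix.det_of_upperTriangular (uu_blockTriangular y)]
  simp [uu_diag]

/-- unipotent element of the subgroup -/
noncomputable def uP (y : Fin (m+1) → ℝ) : upperTriangularSL (m+2) :=
  ⟨⟨uu y, det_uu y⟩, uu_blockTriangular y⟩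

lemma cm_uP (y : Fin (m+1) → ℝ) : cm (uP y) = uu y := rfl

lemma uP_mul_uP (y z : Fin (m+1) → ℝ) : uP y * uP z = uP (y + z) :=
  cm_injective (by rw [cm_mul, cm_uP, cm_uP, cm_uP, uu_mul_uu])

lemma uP_zero : uP (0 : Fin (m+1) → ℝ) = 1 :=
  cm_injective (by rw [cm_uP, uu_zero]; rfl)

lemma uP_inv (y : Fin (m+1) → ℝ) : (uP y)⁻¹ = uP (-y) := by
  apply inv_eq_of_mul_eq_one_right
  rw [uP_mul_uP, add_neg_cancel, uP_zero]

/-- the coordinate function: ratios of last-column entries -/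
noncomputable def xc (p : upperTriangularSL (m+2)) : Fin (m+1) → ℝ :=
  fun i => cm p i.castSucc (LL m) / cm p (LL m) (LL m)

lemma castSucc_ne_LL (i : Fin (m+1)) : (i.castSucc : Fin (m+2)) ≠ LL m :=
  ne_of_lt (Fin.castSucc_lt_last i)

lemma uu_mul_last (y : Fin (m+1) → ℝ) (A : Matrix (Fin (m+2)) (Fin (m+2)) ℝ) :
    (uu y * A) (LL m) (LL m) = A (LL m) (LL m) := by
  rw [uu_mul_apply, dif_neg (by tauto), add_zero]

lemma xc_uP_mul (y : Fin (m+1) → ℝ) (p : upperTriangularSL (m+2)) :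
    xc (uP y * p) = y + xc p := by
  funext i
  have hd := cm_diag_ne_zero p (LL m)
  show (cm (uP y * p)) i.castSucc (LL m) / (cm (uP y * p)) (LL m) (LL m) = _
  rw [cm_mul, cm_uP, uu_mul_last, uu_mul_apply, dif_pos (castSucc_ne_LL i),
    Fin.castPred_castSucc]
  rw [add_div, mul_div_assoc, div_self hd, mul_one]
  simp [xc]
  ring

/-- diagonal matrices diag(s,...,s,(s^(m+1))⁻¹) -/
noncomputable def dd (s : ℝ) : Matrix (Fin (m+2)) (Fin (m+2)) ℝ :=
  Matrix.diagonal fun j => if j = LL m then (s ^ (m+1))⁻¹ else s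

lemma det_dd {s : ℝ} (hs : s ≠ 0) : (dd (m := m) s).det = 1 := by
  rw [dd, Matrix.det_diagonal, Fin.prod_univ_castSucc]
  have h1 : ∀ i : Fin (m+1), (if (i.castSucc : Fin (m+2)) = LL m then (s ^ (m+1))⁻¹ else s) = s :=
    fun i => if_neg (castSucc_ne_LL i)
  rw [Finset.prod_congr rfl (fun i _ => h1 i), Finset.prod_const, Finset.card_univ,
    Fintype.card_fin]
  have h2 : (if (Fin.last (m+1) : Fin (m+2)) = LL m then (s ^ (m+1))⁻¹ else s) = (s ^ (m+1))⁻¹ :=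
    if_pos (rfl : (Fin.last (m+1) : Fin (m+2)) = LL m)
  rw [h2]
  exact mul_inv_cancel₀ (pow_ne_zero _ hs)

/-- diagonal element of the subgroup -/
noncomputable def dP (s : ℝ) (hs : s ≠ 0) : upperTriangularSL (m+2) :=
  ⟨⟨dd s, det_dd hs⟩, Matrix.blockTriangular_diagonal _⟩

lemma cm_dP (s : ℝ) (hs : s ≠ 0) : cm (dP (m := m) s hs) = dd s := rfl

/-- The key matrix identity underlying the conjugation formula. -/
lemma key_matrix (p : upperTriangularSL (m+2)) {s : ℝ} (hs : s ≠ 0) :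
    cm p * dd s = dd s * (uu (((s ^ (m+2))⁻¹ - 1) • xc p) * cm p) := by
  have hd := cm_diag_ne_zero p (LL m)
  have eLL : (LL m : Fin (m+2)) = LL m := rfl
  ext i j
  rw [dd, Matrix.mul_diagonal, Matrix.diagonal_mul, uu_mul_apply]
  by_cases hi : i ≠ LL m
  · rw [dif_pos hi, if_neg hi]
    by_cases hj : j = LL m
    · subst hj
      rw [if_pos eLL]
      simp only [Pi.smul_apply, smul_eq_mul, xc, Fin.castSucc_castPred]
      rw [mul_assoc ((s ^ (m+2))⁻¹ - 1), div_mul_cancel₀ _ hd]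
      have hpow : s * (s ^ (m+2))⁻¹ = (s ^ (m+1))⁻¹ := by
        rw [pow_succ' s (m+1), mul_inv, ← mul_assoc, mul_inv_cancel₀ hs, one_mul]
      have hring : s * (cm p i (LL m) + ((s ^ (m+2))⁻¹ - 1) * cm p i (LL m))
          = s * (s ^ (m+2))⁻¹ * cm p i (LL m) := by ring
      show cm p i (LL m) * (s ^ (m + 1))⁻¹ = s * (cm p i (LL m) + ((s ^ (m + 2))⁻¹ - 1) * cm p i (LL m))
      rw [hring, hpow, mul_comm]
    · rw [if_neg hj, cm_last_row p hj, mul_zero, add_zero, mul_comm]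
  · push_neg at hi
    subst hi
    rw [dif_neg (not_not.mpr rfl), add_zero]
    by_cases hj : j = LL m
    · subst hj
      rw [if_pos eLL, mul_comm]
    · rw [if_neg hj, if_pos eLL, cm_last_row p hj, zero_mul, mul_zero]

lemma conj_eq (p : upperTriangularSL (m+2)) {s : ℝ} (hs : s ≠ 0) :
    (dP s hs)⁻¹ * (p * dP s hs) = uP (((s ^ (m+2))⁻¹ - 1) • xc p) * p := by
  have h2 : p * dP s hs = dP s hs * (uP (((s ^ (m+2))⁻¹ - 1) • xc p) * p) :=
    cm_injective (by rw [cm_mul, cm_mul, cm_mul, cm_uP, cm_dP]; exact key_matrix p hs)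
  rw [h2, inv_mul_cancel_left]

lemma xc_conj (p : upperTriangularSL (m+2)) {s : ℝ} (hs : s ≠ 0) :
    xc ((dP s hs)⁻¹ * (p * dP s hs)) = (s ^ (m+2))⁻¹ • xc p := by
  rw [conj_eq p hs, xc_uP_mul]
  funext i
  simp only [Pi.add_apply, Pi.smul_apply, smul_eq_mul, Pi.sub_apply]
  ring

/-! ### Measurability -/

lemma meas_cm {n : ℕ} : Measurable (cm (n := n)) :=
  measurable_subtype_coe.comp measurable_subtype_coe

lemma meas_entry {n : ℕ} (i j : Fin n) : Measurable fun p : upperTriangularSL n => cm p i j :=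
  (measurable_pi_apply j).comp ((measurable_pi_apply i).comp meas_cm)

lemma meas_xc : Measurable (xc (m := m)) :=
  measurable_pi_lambda _ fun i => (meas_entry _ _).div (meas_entry _ _)

lemma meas_mk {α : Type*} [MeasurableSpace α] {g : α → Matrix (Fin (m+2)) (Fin (m+2)) ℝ}
    (hg : Measurable g) (h1 : ∀ a, (g a).det = 1)
    (h2 : ∀ a, ((⟨g a, h1 a⟩ : Matrix.SpecialLinearGroup (Fin (m+2)) ℝ)) ∈ upperTriangularSL (m+2)) :
    Measurable (fun a => (⟨⟨g a, h1 a⟩, h2 a⟩ : upperTriangularSL (m+2))) :=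
  (hg.subtype_mk).subtype_mk

lemma meas_uP : Measurable (uP (m := m)) := by
  have h : Measurable fun (y : Fin (m+1) → ℝ) => uu (m := m) y := by
    apply measurable_pi_lambda
    intro i
    apply measurable_pi_lambda
    intro j
    have heq : (fun y : Fin (m+1) → ℝ => uu (m := m) y i j)
        = fun y => (1 : Matrix (Fin (m+2)) (Fin (m+2)) ℝ) i j
          + (if h : i ≠ LL m ∧ j = LL m then y (i.castPred h.1) else 0) := rfl
    rw [heq]
    apply Measurable.const_add
    by_cases h : i ≠ LL m ∧ j = LL m
    · simp only [dif_pos h]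
      exact measurable_pi_apply _
    · simp only [dif_neg h]
      exact measurable_const
  exact (h.subtype_mk).subtype_mk

lemma meas_matmul {n : ℕ} :
    Measurable (fun q : upperTriangularSL n × upperTriangularSL n => cm q.1 * cm q.2) := by
  apply measurable_pi_lambda
  intro i
  apply measurable_pi_lambda
  intro j
  show Measurable fun q : upperTriangularSL n × upperTriangularSL n => (cm q.1 * cm q.2) i j
  simp only [Matrix.mul_apply]
  apply Finset.measurable_sum
  intro k _
  exact ((meas_entry i k).comp measurable_fst).mul ((meas_entry k j).comp measurable_snd)

lemma meas_mul {n : ℕ} :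
    Measurable (fun q : upperTriangularSL n × upperTriangularSL n => q.1 * q.2) := by
  have h1 : ∀ q : upperTriangularSL n × upperTriangularSL n, (cm q.1 * cm q.2).det = 1 := by
    intro q
    rw [Matrix.det_mul, cm_det, cm_det, mul_one]
  have h2 : ∀ q : upperTriangularSL n × upperTriangularSL n,
      (⟨cm q.1 * cm q.2, h1 q⟩ : Matrix.SpecialLinearGroup (Fin n) ℝ) ∈ upperTriangularSL n :=
    fun q => Matrix.BlockTriangular.mul (cm_tri q.1) (cm_tri q.2)
  have : (fun q : upperTriangularSL n × upperTriangularSL n => q.1 * q.2)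
      = fun q => (⟨⟨cm q.1 * cm q.2, h1 q⟩, h2 q⟩ : upperTriangularSL n) := by
    funext q
    exact cm_injective rfl
  rw [this]
  exact (meas_matmul.subtype_mk).subtype_mk

lemma meas_mul_left {n : ℕ} (a : upperTriangularSL n) :
    Measurable (fun p : upperTriangularSL n => a * p) :=
  meas_mul.comp (measurable_const.prodMk measurable_id)

lemma meas_mul_right {n : ℕ} (a : upperTriangularSL n) :
    Measurable (fun p : upperTriangularSL n => p * a) :=
  meas_mul.comp (measurable_id.prodMk measurable_const)

/-! ### The analytic core -/

open scoped ENNReal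

variable {μ : Measure (upperTriangularSL (m+2))}

/-- invariance of the fibre integral under unipotent left translation -/
lemma G_invariant {B : Set (upperTriangularSL (m+2))} (z : Fin (m+1) → ℝ)
    (p : upperTriangularSL (m+2)) :
    (∫⁻ y : Fin (m+1) → ℝ, B.indicator (fun _ => (1:ℝ≥0∞)) (uP y * (uP z * p)) ∂volume)
      = ∫⁻ y : Fin (m+1) → ℝ, B.indicator (fun _ => (1:ℝ≥0∞)) (uP y * p) ∂volume := by
  have h : ∀ y : Fin (m+1) → ℝ, uP y * (uP z * p) = uP (y + z) * p := by
    intro y; rw [← mul_assoc, uP_mul_uP]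
  simp_rw [h]
  exact lintegral_add_right_eq_self
    (fun y => B.indicator (fun _ => (1:ℝ≥0∞)) (uP y * p)) z

lemma meas_G {B : Set (upperTriangularSL (m+2))} (hBm : MeasurableSet B) :
    Measurable fun p : upperTriangularSL (m+2) =>
      ∫⁻ y : Fin (m+1) → ℝ, B.indicator (fun _ => (1:ℝ≥0∞)) (uP y * p) ∂volume := by
  apply Measurable.lintegral_prod_right
  exact (measurable_const.indicator hBm).comp
    (meas_mul.comp ((meas_uP.comp measurable_snd).prodMk measurable_fst))

/-- the Weil-type identity for the abstract left-invariant measure -/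
lemma star_lemma [SigmaFinite μ]
    (hleft : ∀ p : upperTriangularSL (m+2), μ.map (fun x => p * x) = μ)
    {B : Set (upperTriangularSL (m+2))} (hBm : MeasurableSet B)
    (f : (Fin (m+1) → ℝ) → ℝ≥0∞) (hf : Measurable f) :
    ∫⁻ p, f (xc p) * (∫⁻ y : Fin (m+1) → ℝ,
        B.indicator (fun _ => (1:ℝ≥0∞)) (uP y * p) ∂volume) ∂μ
      = (∫⁻ y : Fin (m+1) → ℝ, f y ∂volume) * μ B := by
  have hindm : Measurable (B.indicator (fun _ => (1:ℝ≥0∞))) := measurable_const.indicator hBm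
  have hfxc : Measurable fun p : upperTriangularSL (m+2) => f (xc p) := hf.comp meas_xc
  have subst_left : ∀ (a : upperTriangularSL (m+2)) (F : upperTriangularSL (m+2) → ℝ≥0∞),
      Measurable F → ∫⁻ p, F (a * p) ∂μ = ∫⁻ p, F p ∂μ := by
    intro a F hF
    conv_rhs => rw [← hleft a]
    rw [lintegral_map hF (meas_mul_left a)]
  have hinner : ∀ p : upperTriangularSL (m+2),
      Measurable fun y : Fin (m+1) → ℝ => B.indicator (fun _ => (1:ℝ≥0∞)) (uP y * p) :=
    fun p => hindm.comp ((meas_mul_right p).comp meas_uP)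
  have hj1 : Measurable fun q : (upperTriangularSL (m+2)) × (Fin (m+1) → ℝ) =>
      f (xc q.1) * B.indicator (fun _ => (1:ℝ≥0∞)) (uP q.2 * q.1) :=
    (hfxc.comp measurable_fst).mul
      (hindm.comp (meas_mul.comp ((meas_uP.comp measurable_snd).prodMk measurable_fst)))
  have hj2 : Measurable fun q : (Fin (m+1) → ℝ) × (upperTriangularSL (m+2)) =>
      f (xc q.2 - q.1) * B.indicator (fun _ => (1:ℝ≥0∞)) q.2 :=
    (hf.comp ((meas_xc.comp measurable_snd).sub measurable_fst)).mul
      (hindm.comp measurable_snd)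
  calc ∫⁻ p, f (xc p) * (∫⁻ y : Fin (m+1) → ℝ,
          B.indicator (fun _ => (1:ℝ≥0∞)) (uP y * p) ∂volume) ∂μ
      = ∫⁻ p, ∫⁻ y : Fin (m+1) → ℝ,
          f (xc p) * B.indicator (fun _ => (1:ℝ≥0∞)) (uP y * p) ∂volume ∂μ := by
        refine lintegral_congr fun p => ?_
        rw [lintegral_const_mul _ (hinner p)]
    _ = ∫⁻ y : Fin (m+1) → ℝ, ∫⁻ p,
          f (xc p) * B.indicator (fun _ => (1:ℝ≥0∞)) (uP y * p) ∂μ ∂volume :=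
        lintegral_lintegral_swap hj1.aemeasurable
    _ = ∫⁻ y : Fin (m+1) → ℝ, ∫⁻ p,
          f (xc p - y) * B.indicator (fun _ => (1:ℝ≥0∞)) p ∂μ ∂volume := by
        refine lintegral_congr fun y => ?_
        have hF : Measurable fun p : upperTriangularSL (m+2) =>
            f (xc p) * B.indicator (fun _ => (1:ℝ≥0∞)) (uP y * p) :=
          hfxc.mul (hindm.comp (meas_mul_left (uP y)))
        rw [← subst_left ((uP y)⁻¹) _ hF]
        refine lintegral_congr fun p => ?_
        rw [uP_inv, xc_uP_mul]
        have h1 : uP y * (uP (-y) * p) = p := by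
          rw [← mul_assoc, uP_mul_uP, add_neg_cancel, uP_zero, one_mul]
        rw [h1, neg_add_eq_sub]
    _ = ∫⁻ p, ∫⁻ y : Fin (m+1) → ℝ,
          f (xc p - y) * B.indicator (fun _ => (1:ℝ≥0∞)) p ∂volume ∂μ :=
        lintegral_lintegral_swap hj2.aemeasurable
    _ = ∫⁻ p, (∫⁻ y : Fin (m+1) → ℝ, f (xc p - y) ∂volume)
          * B.indicator (fun _ => (1:ℝ≥0∞)) p ∂μ := by
        refine lintegral_congr fun p => ?_
        have hmeas : Measurable fun y : Fin (m+1) → ℝ => f (xc p - y) :=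
          hf.comp (measurable_const.sub measurable_id)
        rw [lintegral_mul_const _ hmeas]
    _ = ∫⁻ p, (∫⁻ y : Fin (m+1) → ℝ, f y ∂volume)
          * B.indicator (fun _ => (1:ℝ≥0∞)) p ∂μ := by
        refine lintegral_congr fun p => ?_
        congr 1
        have hnegmap : (volume : Measure (Fin (m+1) → ℝ)).map (fun y => (-1 : ℝ) • y)
            = volume := by
          have habs : |(((-1 : ℝ)) ^ Module.finrank ℝ (Fin (m+1) → ℝ))⁻¹| = 1 := by
            rw [abs_inv, abs_pow, abs_neg, abs_one, one_pow, inv_one]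
          rw [Measure.map_addHaar_smul volume (by norm_num : (-1:ℝ) ≠ 0), habs,
            ENNReal.ofReal_one, one_smul]
        calc ∫⁻ y : Fin (m+1) → ℝ, f (xc p - y) ∂volume
            = ∫⁻ y : Fin (m+1) → ℝ, f (xc p + (-1 : ℝ) • y) ∂volume := by
              refine lintegral_congr fun y => ?_
              rw [neg_one_smul, ← sub_eq_add_neg]
          _ = ∫⁻ y : Fin (m+1) → ℝ, f (xc p + y) ∂volume := by
              conv_rhs => rw [← hnegmap]
              have hg : Measurable fun y : Fin (m+1) → ℝ => f (xc p + y) :=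
                hf.comp (measurable_const.add measurable_id)
              rw [lintegral_map hg (measurable_const_smul _)]
          _ = ∫⁻ y : Fin (m+1) → ℝ, f y ∂volume :=
              lintegral_add_left_eq_self f (xc p)
    _ = (∫⁻ y : Fin (m+1) → ℝ, f y ∂volume) * μ B := by
        rw [lintegral_const_mul _ hindm, lintegral_indicator_const hBm, one_mul]

/-- the scaling behaviour of Lebesgue integrals on `ℝ^(m+1)` -/
lemma scale_lemma {σ : ℝ} (hσ : 0 < σ) (f : (Fin (m+1) → ℝ) → ℝ≥0∞) (hf : Measurable f) :
    ∫⁻ y : Fin (m+1) → ℝ, f (σ • y) ∂volume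
      = (ENNReal.ofReal (σ ^ (m+1)))⁻¹ * ∫⁻ y : Fin (m+1) → ℝ, f y ∂volume := by
  have hσp : (0:ℝ) < σ ^ (m+1) := pow_pos hσ _
  have hmap : (volume : Measure (Fin (m+1) → ℝ)).map (fun y => σ • y)
      = ENNReal.ofReal (|(σ ^ Module.finrank ℝ (Fin (m+1) → ℝ))⁻¹|) • volume :=
    Measure.map_addHaar_smul volume hσ.ne'
  have hfr : Module.finrank ℝ (Fin (m+1) → ℝ) = m + 1 := Module.finrank_fin_fun ℝ
  calc ∫⁻ y : Fin (m+1) → ℝ, f (σ • y) ∂volume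
      = ∫⁻ y, f y ∂((volume : Measure (Fin (m+1) → ℝ)).map (fun y => σ • y)) :=
        (lintegral_map hf (measurable_const_smul _)).symm
    _ = ENNReal.ofReal (|(σ ^ (m+1))⁻¹|) * ∫⁻ y : Fin (m+1) → ℝ, f y ∂volume := by
        rw [hmap, hfr, lintegral_smul_measure, smul_eq_mul]
    _ = (ENNReal.ofReal (σ ^ (m+1)))⁻¹ * ∫⁻ y : Fin (m+1) → ℝ, f y ∂volume := by
        rw [abs_of_pos (inv_pos.mpr hσp), ENNReal.ofReal_inv_of_pos hσp]

/-- The main computation : the value of the modular function on `dP s`. -/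
theorem key_value (μ : Measure (upperTriangularSL (m+2))) [SigmaFinite μ] (hμ : μ ≠ 0)
    (hleft : ∀ p : upperTriangularSL (m+2), μ.map (fun x => p * x) = μ)
    (Δ : upperTriangularSL (m+2) → ℝ) (hΔpos : ∀ p, 0 < Δ p)
    (hmod : ∀ p : upperTriangularSL (m+2),
      μ.map (fun x => x * p) = (ENNReal.ofReal (Δ p))⁻¹ • μ)
    {s : ℝ} (hs : 0 < s) :
    Δ (dP s hs.ne') = ((s ^ (m+2)) ^ (m+1))⁻¹ := by
  classical
  have hσ : (0:ℝ) < s ^ (m+2) := pow_pos hs _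
  have hσp : (0:ℝ) < (s ^ (m+2)) ^ (m+1) := pow_pos hσ _
  -- pick a set of finite positive measure
  obtain ⟨B, hBm, hB0, hBfin⟩ : ∃ B : Set (upperTriangularSL (m+2)),
      MeasurableSet B ∧ 0 < μ B ∧ μ B < ⊤ := by
    have h1 : ∃ k, μ (spanningSets μ k) ≠ 0 := by
      by_contra h
      push_neg at h
      apply hμ
      have huniv : μ Set.univ = 0 := by
        rw [← MeasureTheory.iUnion_spanningSets μ]
        exact le_antisymm ((measure_iUnion_le _).trans (by simp [h])) zero_le
      exact Measure.measure_univ_eq_zero.mp huniv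
    obtain ⟨k, hk⟩ := h1
    exact ⟨spanningSets μ k, measurableSet_spanningSets μ k, pos_iff_ne_zero.mpr hk,
      measure_spanningSets_lt_top μ k⟩
  set d : upperTriangularSL (m+2) := dP s hs.ne' with hd
  -- the conjugation substitution
  have hconjmeas : Measurable fun p : upperTriangularSL (m+2) => d⁻¹ * (p * d) :=
    (meas_mul_left d⁻¹).comp (meas_mul_right d)
  have map_conj : μ.map (fun p => d⁻¹ * (p * d)) = (ENNReal.ofReal (Δ d))⁻¹ • μ := by
    have hcomp : (fun p : upperTriangularSL (m+2) => d⁻¹ * (p * d))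
        = (fun x => d⁻¹ * x) ∘ (fun x => x * d) := rfl
    rw [hcomp, ← Measure.map_map (meas_mul_left d⁻¹) (meas_mul_right d), hmod d,
      Measure.map_smul, hleft d⁻¹]
  have subst_conj : ∀ (F : upperTriangularSL (m+2) → ℝ≥0∞), Measurable F →
      ∫⁻ p, F (d⁻¹ * (p * d)) ∂μ = (ENNReal.ofReal (Δ d))⁻¹ * ∫⁻ p, F p ∂μ := by
    intro F hF
    rw [← lintegral_map hF hconjmeas, map_conj, lintegral_smul_measure, smul_eq_mul]
  -- the test function
  set f : (Fin (m+1) → ℝ) → ℝ≥0∞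
    := (Metric.ball (0 : Fin (m+1) → ℝ) 1).indicator (fun _ => (1:ℝ≥0∞)) with hfdef
  have hfm : Measurable f := measurable_const.indicator measurableSet_ball
  have hLf : ∫⁻ y : Fin (m+1) → ℝ, f y ∂volume
      = volume (Metric.ball (0 : Fin (m+1) → ℝ) 1) := by
    rw [hfdef, lintegral_indicator_const measurableSet_ball, one_mul]
  have hL0 : volume (Metric.ball (0 : Fin (m+1) → ℝ) 1) ≠ 0 :=
    (Metric.measure_ball_pos _ _ one_pos).ne'
  have hLfin : volume (Metric.ball (0 : Fin (m+1) → ℝ) 1) ≠ ⊤ :=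
    measure_ball_lt_top.ne
  -- the two evaluations
  have hfσ : Measurable fun y : Fin (m+1) → ℝ => f ((s ^ (m+2)) • y) :=
    hfm.comp (measurable_const_smul _)
  have hFm : Measurable fun p : upperTriangularSL (m+2) =>
      f ((s ^ (m+2)) • xc p) * (∫⁻ y : Fin (m+1) → ℝ,
        B.indicator (fun _ => (1:ℝ≥0∞)) (uP y * p) ∂volume) :=
    (hfσ.comp meas_xc).mul (meas_G hBm)
  have hE1 : ∫⁻ p, f ((s ^ (m+2)) • xc p) * (∫⁻ y : Fin (m+1) → ℝ,
        B.indicator (fun _ => (1:ℝ≥0∞)) (uP y * p) ∂volume) ∂μ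
      = ((ENNReal.ofReal ((s ^ (m+2)) ^ (m+1)))⁻¹
          * (∫⁻ y : Fin (m+1) → ℝ, f y ∂volume)) * μ B := by
    rw [star_lemma hleft hBm (fun y => f ((s ^ (m+2)) • y)) hfσ, scale_lemma hσ f hfm]
  have hE3 : ∫⁻ p, f (xc p) * (∫⁻ y : Fin (m+1) → ℝ,
        B.indicator (fun _ => (1:ℝ≥0∞)) (uP y * p) ∂volume) ∂μ
      = (ENNReal.ofReal (Δ d))⁻¹ * ∫⁻ p, f ((s ^ (m+2)) • xc p)
          * (∫⁻ y : Fin (m+1) → ℝ,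
              B.indicator (fun _ => (1:ℝ≥0∞)) (uP y * p) ∂volume) ∂μ := by
    rw [← subst_conj _ hFm]
    refine lintegral_congr fun p => ?_
    rw [hd, xc_conj p hs.ne', conj_eq p hs.ne', G_invariant, smul_smul,
      mul_inv_cancel₀ hσ.ne', one_smul]
  have hstar1 : ∫⁻ p, f (xc p) * (∫⁻ y : Fin (m+1) → ℝ,
        B.indicator (fun _ => (1:ℝ≥0∞)) (uP y * p) ∂volume) ∂μ
      = (∫⁻ y : Fin (m+1) → ℝ, f y ∂volume) * μ B := star_lemma hleft hBm f hfm
  -- cancellation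
  set A : ℝ≥0∞ := (∫⁻ y : Fin (m+1) → ℝ, f y ∂volume) * μ B with hA
  have hA0 : A ≠ 0 := by
    rw [hA, hLf]; exact mul_ne_zero hL0 hB0.ne'
  have hAtop : A ≠ ⊤ := by
    rw [hA, hLf]; exact ENNReal.mul_ne_top hLfin hBfin.ne
  have hkey : A = ((ENNReal.ofReal (Δ d))⁻¹
      * (ENNReal.ofReal ((s ^ (m+2)) ^ (m+1)))⁻¹) * A := by
    calc A = ∫⁻ p, f (xc p) * (∫⁻ y : Fin (m+1) → ℝ,
          B.indicator (fun _ => (1:ℝ≥0∞)) (uP y * p) ∂volume) ∂μ := hstar1.symm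
      _ = (ENNReal.ofReal (Δ d))⁻¹ * ∫⁻ p, f ((s ^ (m+2)) • xc p)
          * (∫⁻ y : Fin (m+1) → ℝ,
              B.indicator (fun _ => (1:ℝ≥0∞)) (uP y * p) ∂volume) ∂μ := hE3
      _ = (ENNReal.ofReal (Δ d))⁻¹ * (((ENNReal.ofReal ((s ^ (m+2)) ^ (m+1)))⁻¹
          * (∫⁻ y : Fin (m+1) → ℝ, f y ∂volume)) * μ B) := by rw [hE1]
      _ = ((ENNReal.ofReal (Δ d))⁻¹
          * (ENNReal.ofReal ((s ^ (m+2)) ^ (m+1)))⁻¹) * A := by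
          rw [hA]; ring
  have hone : (ENNReal.ofReal (Δ d))⁻¹ * (ENNReal.ofReal ((s ^ (m+2)) ^ (m+1)))⁻¹ = 1 := by
    have h1 : ((ENNReal.ofReal (Δ d))⁻¹
        * (ENNReal.ofReal ((s ^ (m+2)) ^ (m+1)))⁻¹) * A = A := hkey.symm
    have h2 : ((ENNReal.ofReal (Δ d))⁻¹ * (ENNReal.ofReal ((s ^ (m+2)) ^ (m+1)))⁻¹)
        * (A * A⁻¹) = A * A⁻¹ := by rw [← mul_assoc, h1]
    rwa [ENNReal.mul_inv_cancel hA0 hAtop, mul_one] at h2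
  -- extract the real identity
  have hx0 : ENNReal.ofReal (Δ d) ≠ 0 := (ENNReal.ofReal_pos.mpr (hΔpos d)).ne'
  have hxtop : ENNReal.ofReal (Δ d) ≠ ⊤ := ENNReal.ofReal_ne_top
  have hy0 : ENNReal.ofReal ((s ^ (m+2)) ^ (m+1)) ≠ 0 := (ENNReal.ofReal_pos.mpr hσp).ne'
  have hytop : ENNReal.ofReal ((s ^ (m+2)) ^ (m+1)) ≠ ⊤ := ENNReal.ofReal_ne_top
  have hmul1 : ENNReal.ofReal (Δ d) * ENNReal.ofReal ((s ^ (m+2)) ^ (m+1)) = 1 := by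
    rw [← ENNReal.inv_eq_one, ENNReal.mul_inv (Or.inl hx0) (Or.inr hy0)]
    exact hone
  rw [← ENNReal.ofReal_mul (hΔpos d).le, ENNReal.ofReal_eq_one] at hmul1
  -- Δ d * X = 1  with X = (s^(m+2))^(m+1)
  field_simp at hmul1 ⊢
  linarith [hmul1]

end ModularAux

/-- For `n ≥ 2` and `P` the subgroup of upper triangular matrices in `SL_n(ℝ)`, the modular
homomorphism `Δ_P : P → ℝ*₊` (characterized by the behaviour of a left Haar measure `μ` on `P`
under right translations: `(R_p)_* μ = Δ_P(p)⁻¹ μ`) is surjective onto the positive reals. -/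
theorem stmt_6 (n : ℕ) (hn : 2 ≤ n)
    (μ : Measure (upperTriangularSL n)) [SigmaFinite μ] (hμ : μ ≠ 0)
    (hleft : ∀ p : upperTriangularSL n, μ.map (fun x => p * x) = μ)
    (Δ : upperTriangularSL n → ℝ) (hΔpos : ∀ p, 0 < Δ p)
    (hmod : ∀ p : upperTriangularSL n,
      μ.map (fun x => x * p) = (ENNReal.ofReal (Δ p))⁻¹ • μ) :
    ∀ t : ℝ, 0 < t → ∃ p : upperTriangularSL n, Δ p = t := by
  obtain ⟨m, rfl⟩ : ∃ m, n = m + 2 := ⟨n - 2, by omega⟩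
  intro t ht
  have hNpos : (0:ℝ) < (((m+2) * (m+1) : ℕ) : ℝ) := by positivity
  set r : ℝ := -1 / (((m+2) * (m+1) : ℕ) : ℝ) with hr
  set s : ℝ := t ^ r with hsdef
  have hs : 0 < s := Real.rpow_pos_of_pos ht _
  refine ⟨ModularAux.dP s hs.ne', ?_⟩
  rw [ModularAux.key_value μ hμ hleft Δ hΔpos hmod hs, ← pow_mul]
  have hsN : s ^ ((m+2) * (m+1)) = t⁻¹ := by
    have h1 : s ^ ((m+2) * (m+1)) = (t ^ r) ^ ((((m+2) * (m+1) : ℕ) : ℝ)) := by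
      rw [Real.rpow_natCast, hsdef]
    have h2 : (t ^ r) ^ ((((m+2) * (m+1) : ℕ) : ℝ)) = t ^ (r * (((m+2) * (m+1) : ℕ) : ℝ)) :=
      (Real.rpow_mul ht.le _ _).symm
    have h3 : r * (((m+2) * (m+1) : ℕ) : ℝ) = -1 := by
      rw [hr]
      field_simp
    rw [h1, h2, h3, Real.rpow_neg_one]
  rw [hsN, inv_inv]
end

section
/- Let M be a σ-finite von Neumann algebra with a von Neumann subalgebra Q ⊂ M and a faithful normal conditional expectation E_Q : M → Q. Let ω be a nonprincipal ultrafilter on ℕ. Then the map E_{Q^ω} : M^ω → Q^ω defined by (x_n)^ω ↦ (E_Q(x_n))^ω is a well-defined faithful normal conditional expectation, and for any faithful normal state φ on M with φ = φ ∘ E_Q one has φ^ω ∘ E_{Q^ω} = φ^ω. -/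
open Filter

section

variable {M : Type*} [NormedRing M] [StarRing M] [CStarRing M] [CompleteSpace M]
  [NormedAlgebra ℂ M] [StarModule ℂ M]

/-- A sequence in `M` is bounded. -/
def BddSeq (x : ℕ → M) : Prop := ∃ K : ℝ, ∀ n, ‖x n‖ ≤ K

/-- The ideal `𝓘_ω(M)` of bounded sequences converging to `0` *-strongly along `ω`
(tested against the fixed faithful normal state `φ`). -/
def InIω (φ : M →ₗ[ℂ] ℂ) (ω : Ultrafilter ℕ) (x : ℕ → M) : Prop :=
  BddSeq x ∧ Tendsto (fun n => φ (star (x n) * x n)) (ω : Filter ℕ) (nhds 0) ∧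
    Tendsto (fun n => φ (x n * star (x n))) (ω : Filter ℕ) (nhds 0)

/-- The multiplier algebra `𝓜^ω(M)` of `𝓘_ω(M)` inside `ℓ^∞(M)`. -/
def InMω (φ : M →ₗ[ℂ] ℂ) (ω : Ultrafilter ℕ) (x : ℕ → M) : Prop :=
  BddSeq x ∧ ∀ y : ℕ → M, InIω φ ω y →
    InIω φ ω (fun n => x n * y n) ∧ InIω φ ω (fun n => y n * x n)

end

set_option linter.unusedSectionVars false
set_option linter.unusedVariables false
set_option maxHeartbeats 1000000

section Aux

variable {M : Type*} [NormedRing M] [StarRing M] [CStarRing M] [CompleteSpace M]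
  [NormedAlgebra ℂ M] [StarModule ℂ M]

variable (φ : M →ₗ[ℂ] ℂ)

lemma aux_inq (hφpos : ∀ x : M, 0 ≤ (φ (star x * x)).re ∧ (φ (star x * x)).im = 0)
    (a c : M) : (φ (star a * (star c * c) * a)).re ≤ ‖c‖^2 * (φ (star a * a)).re := by
  letI : CStarAlgebra M :=
    { ‹NormedRing M›, ‹StarRing M›, ‹CompleteSpace M›, ‹CStarRing M›, ‹NormedAlgebra ℂ M›,
      ‹StarModule ℂ M› with }
  letI := CStarAlgebra.spectralOrder M
  letI := CStarAlgebra.spectralOrderedRing M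
  have hle : star a * (star c * c) * a ≤ ‖star c * c‖ • (star a * a) :=
    CStarAlgebra.star_left_conjugate_le_norm_smul (IsSelfAdjoint.star_mul_self c)
  have hmono : ∀ u v : M, u ≤ v → (φ u).re ≤ (φ v).re := by
    intro u v huv
    rw [StarOrderedRing.le_iff] at huv
    obtain ⟨p, hp, rfl⟩ := huv
    rw [map_add]
    simp only [Complex.add_re, le_add_iff_nonneg_right]
    induction hp using AddSubmonoid.closure_induction with
    | mem z hz => obtain ⟨s, rfl⟩ := hz; exact (hφpos s).1
    | zero => simp
    | add z w _ _ hz hw => rw [map_add]; simpa using add_nonneg hz hw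
  have h2 := hmono _ _ hle
  rw [LinearMap.map_smul_of_tower] at h2
  calc (φ (star a * (star c * c) * a)).re ≤ (‖star c * c‖ • φ (star a * a)).re := h2
    _ = ‖star c * c‖ * (φ (star a * a)).re := by simp [Complex.real_smul]
    _ = ‖c‖^2 * (φ (star a * a)).re := by rw [CStarRing.norm_star_mul_self]; ring

lemma aux_bound (hφ1 : φ 1 = 1)
    (hφpos : ∀ x : M, 0 ≤ (φ (star x * x)).re ∧ (φ (star x * x)).im = 0)
    (c : M) : (φ (star c * c)).re ≤ ‖c‖^2 := by
  have h := aux_inq φ hφpos 1 c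
  simpa [hφ1] using h

lemma aux_conj (hφpos : ∀ x : M, 0 ≤ (φ (star x * x)).re ∧ (φ (star x * x)).im = 0)
    (a b : M) : φ (star b * a) = starRingEnd ℂ (φ (star a * b)) := by
  have key : ∀ u v : M, φ (star (u + v) * (u + v))
      = φ (star u * u) + φ (star u * v) + φ (star v * u) + φ (star v * v) := by
    intro u v
    rw [star_add, add_mul, mul_add, mul_add, map_add, map_add, map_add]; ring
  have h1 := (hφpos (a + b)).2
  rw [key] at h1
  have h2 := (hφpos (a + Complex.I • b)).2
  rw [key] at h2
  have eI1 : φ (star a * (Complex.I • b)) = Complex.I * φ (star a * b) := by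
    rw [mul_smul_comm, map_smul, smul_eq_mul]
  have eI2 : φ (star (Complex.I • b) * a) = -(Complex.I * φ (star b * a)) := by
    rw [star_smul, smul_mul_assoc, map_smul, smul_eq_mul, Complex.star_def, Complex.conj_I]
    ring
  have eI3 : φ (star (Complex.I • b) * (Complex.I • b)) = φ (star b * b) := by
    rw [star_smul, smul_mul_assoc, mul_smul_comm, map_smul, map_smul, smul_eq_mul, smul_eq_mul,
      Complex.star_def, Complex.conj_I]
    ring_nf
    simp [Complex.I_sq]
  rw [eI1, eI2, eI3] at h2
  have ha := (hφpos a).2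
  have hb := (hφpos b).2
  rw [Complex.ext_iff]
  constructor
  · simp only [Complex.add_im, Complex.mul_im, Complex.neg_im, Complex.I_re, Complex.I_im,
      ha, hb] at h1 h2 ⊢
    simp only [Complex.conj_re]
    nlinarith [h1, h2]
  · simp only [Complex.add_im, Complex.mul_im, Complex.neg_im, Complex.I_re, Complex.I_im,
      ha, hb] at h1 h2 ⊢
    simp only [Complex.conj_im]
    nlinarith [h1, h2]

lemma aux_expand (hφpos : ∀ x : M, 0 ≤ (φ (star x * x)).re ∧ (φ (star x * x)).im = 0)
    (a b : M) (t : ℂ) :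
    (φ (star (a + t • b) * (a + t • b))).re
      = (φ (star a * a)).re + 2 * (t * φ (star a * b)).re
        + Complex.normSq t * (φ (star b * b)).re := by
  have hconj := aux_conj φ hφpos a b
  have e : star (a + t • b) * (a + t • b)
      = star a * a + t • (star a * b) + star t • (star b * a)
        + (star t * t) • (star b * b) := by
    rw [star_add, star_smul, add_mul, mul_add, mul_add, smul_mul_assoc, smul_mul_assoc,
      mul_smul_comm, mul_smul_comm, smul_smul]
    abel
  rw [e, map_add, map_add, map_add, map_smul, map_smul, map_smul, hconj]
  have h2 : (φ (star b * b)).im = 0 := (hφpos b).2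
  simp only [smul_eq_mul, Complex.add_re, Complex.mul_re, Complex.star_def, Complex.conj_re,
    Complex.conj_im, Complex.normSq_apply, h2]
  ring

lemma aux_cs (hφ1 : φ 1 = 1)
    (hφpos : ∀ x : M, 0 ≤ (φ (star x * x)).re ∧ (φ (star x * x)).im = 0)
    (a b : M) :
    ‖φ (star a * b)‖^2 ≤ (φ (star a * a)).re * (φ (star b * b)).re := by
  set p := φ (star a * b) with hp
  set A := (φ (star a * a)).re with hA'
  set B := (φ (star b * b)).re with hB'
  have hA : 0 ≤ A := (hφpos a).1
  have hB : 0 ≤ B := (hφpos b).1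
  set N := Complex.normSq p with hN'
  have hN0 : 0 ≤ N := Complex.normSq_nonneg p
  have quad : ∀ r : ℝ, 0 ≤ A - 2 * r * N + r^2 * N * B := by
    intro r
    have h := (hφpos (a + (-(r:ℂ) * starRingEnd ℂ p) • b)).1
    rw [aux_expand φ hφpos a b _] at h
    have e1 : (-(r:ℂ) * starRingEnd ℂ p * p).re = -(r * N) := by
      rw [mul_assoc, ← Complex.normSq_eq_conj_mul_self]
      simp [hN']
    have e2 : Complex.normSq (-(r:ℂ) * starRingEnd ℂ p) = r^2 * N := by
      rw [Complex.normSq_mul, Complex.normSq_conj, Complex.normSq_neg, Complex.normSq_ofReal]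
      ring
    rw [e1, e2] at h
    linarith [h]
  have key : N ≤ A * B := by
    by_cases hN : N = 0
    · rw [hN]; exact mul_nonneg hA hB
    · have hNpos : 0 < N := lt_of_le_of_ne hN0 (Ne.symm hN)
      by_cases hB0 : B = 0
      · exfalso
        have h := quad ((A+1)/(2*N))
        rw [hB0] at h
        have e : 2 * ((A+1)/(2*N)) * N = A + 1 := by field_simp
        nlinarith [h]
      · have hBpos : 0 < B := lt_of_le_of_ne hB (Ne.symm hB0)
        have h := quad (1/B)
        have e : A - 2*(1/B)*N + (1/B)^2*N*B = A - N/B := by field_simp; ring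
        rw [e] at h
        have hNB : N/B ≤ A := by linarith
        calc N = (N/B) * B := by field_simp
          _ ≤ A * B := mul_le_mul_of_nonneg_right hNB hB
  calc ‖p‖^2 = N := by rw [hN', ← Complex.sq_norm]
    _ ≤ A * B := key

lemma aux_cs' (hφ1 : φ 1 = 1)
    (hφpos : ∀ x : M, 0 ≤ (φ (star x * x)).re ∧ (φ (star x * x)).im = 0)
    (a b : M) :
    ‖φ (star a * b)‖ ≤ Real.sqrt (φ (star a * a)).re * Real.sqrt (φ (star b * b)).re := by
  have h := Real.sqrt_le_sqrt (aux_cs φ hφ1 hφpos a b)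
  rwa [Real.sqrt_sq (norm_nonneg _), Real.sqrt_mul (hφpos a).1] at h

lemma aux_t1 (g : ℕ → ℂ) (l : Filter ℕ) (him : ∀ n, (g n).im = 0) :
    Tendsto g l (nhds 0) ↔ Tendsto (fun n => (g n).re) l (nhds 0) := by
  constructor
  · intro h
    simpa [Function.comp_def] using (Complex.continuous_re.tendsto 0).comp h
  · intro h
    have e : g = fun n => ((g n).re : ℂ) := by
      funext n
      exact Complex.ext rfl (by simp [him n])
    rw [e]
    have := (Complex.continuous_ofReal.tendsto 0).comp h
    simpa [Function.comp_def] using this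

lemma aux_t2 {l : Filter ℕ} (g : ℕ → ℂ) (u : ℕ → ℝ) (h : ∀ n, ‖g n‖ ≤ u n)
    (hu : Tendsto u l (nhds 0)) : Tendsto g l (nhds 0) := by
  rw [tendsto_zero_iff_norm_tendsto_zero]
  exact squeeze_zero (fun n => norm_nonneg _) h hu

lemma aux_sqrt_t {l : Filter ℕ} (u : ℕ → ℝ) (hu : Tendsto u l (nhds 0)) :
    Tendsto (fun n => Real.sqrt (u n)) l (nhds 0) := by
  have := (Real.continuous_sqrt.tendsto 0).comp hu
  simpa [Function.comp_def] using this

lemma aux_bdd_mul {a b : ℕ → M} (ha : BddSeq a) (hb : BddSeq b) :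
    BddSeq (fun n => a n * b n) := by
  obtain ⟨Ka, hKa⟩ := ha
  obtain ⟨Kb, hKb⟩ := hb
  exact ⟨|Ka| * |Kb|, fun n => (norm_mul_le _ _).trans
    (mul_le_mul ((hKa n).trans (le_abs_self _)) ((hKb n).trans (le_abs_self _))
      (norm_nonneg _) (abs_nonneg _))⟩

lemma aux_bdd_star {a : ℕ → M} (ha : BddSeq a) : BddSeq (fun n => star (a n)) := by
  obtain ⟨K, hK⟩ := ha
  exact ⟨K, fun n => by rw [norm_star]; exact hK n⟩

variable (ω : Ultrafilter ℕ)

lemma aux_Iω_star {y : ℕ → M} (hy : InIω φ ω y) : InIω φ ω (fun n => star (y n)) :=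
  ⟨aux_bdd_star hy.1, by simpa [star_star] using hy.2.2, by simpa [star_star] using hy.2.1⟩

lemma aux_abs (hφ1 : φ 1 = 1)
    (hφpos : ∀ x : M, 0 ≤ (φ (star x * x)).re ∧ (φ (star x * x)).im = 0)
    (z : M) : ‖φ z‖ ≤ Real.sqrt (φ (star z * z)).re := by
  have h := aux_cs' φ hφ1 hφpos 1 z
  simpa [hφ1] using h

lemma aux_Iω_phi (hφ1 : φ 1 = 1)
    (hφpos : ∀ x : M, 0 ≤ (φ (star x * x)).re ∧ (φ (star x * x)).im = 0)
    {y : ℕ → M} (hy : InIω φ ω y) : Tendsto (fun n => φ (y n)) (ω : Filter ℕ) (nhds 0) := by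
  apply aux_t2 _ (fun n => Real.sqrt (φ (star (y n) * y n)).re)
    (fun n => aux_abs φ hφ1 hφpos _)
  apply aux_sqrt_t
  exact ((aux_t1 _ _ (fun n => (hφpos (y n)).2)).mp hy.2.1)

lemma aux_right (hφ1 : φ 1 = 1)
    (hφpos : ∀ x : M, 0 ≤ (φ (star x * x)).re ∧ (φ (star x * x)).im = 0)
    {y c : ℕ → M} (hy : InIω φ ω y) (hc : BddSeq c) :
    Tendsto (fun n => φ (y n * star (c n))) (ω : Filter ℕ) (nhds 0) := by
  obtain ⟨K, hK⟩ := hc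
  have hK0 : 0 ≤ K := (norm_nonneg _).trans (hK 0)
  apply aux_t2 _ (fun n => Real.sqrt (φ (y n * star (y n))).re * K)
  · intro n
    have h := aux_cs' φ hφ1 hφpos (star (y n)) (star (c n))
    rw [star_star, star_star] at h
    refine h.trans ?_
    apply mul_le_mul_of_nonneg_left _ (Real.sqrt_nonneg _)
    have hb : (φ (c n * star (c n))).re ≤ K^2 := by
      have h2 := aux_bound φ hφ1 hφpos (star (c n))
      rw [star_star, norm_star] at h2
      exact h2.trans (pow_le_pow_left₀ (norm_nonneg _) (hK n) 2)
    calc Real.sqrt (φ (c n * star (c n))).re ≤ Real.sqrt (K^2) := Real.sqrt_le_sqrt hb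
      _ = K := Real.sqrt_sq hK0
  · have h := aux_sqrt_t (l := (ω : Filter ℕ)) _
      ((aux_t1 _ _ (fun n => by simpa [star_star] using (hφpos (star (y n))).2)).mp hy.2.2)
    simpa using h.mul_const K

lemma aux_left (hφ1 : φ 1 = 1)
    (hφpos : ∀ x : M, 0 ≤ (φ (star x * x)).re ∧ (φ (star x * x)).im = 0)
    {y c : ℕ → M} (hy : InIω φ ω y) (hc : BddSeq c) :
    Tendsto (fun n => φ (star (c n) * y n)) (ω : Filter ℕ) (nhds 0) := by
  obtain ⟨K, hK⟩ := hc
  have hK0 : 0 ≤ K := (norm_nonneg _).trans (hK 0)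
  apply aux_t2 _ (fun n => K * Real.sqrt (φ (star (y n) * y n)).re)
  · intro n
    refine (aux_cs' φ hφ1 hφpos (c n) (y n)).trans ?_
    apply mul_le_mul_of_nonneg_right _ (Real.sqrt_nonneg _)
    have hb : (φ (star (c n) * c n)).re ≤ K^2 :=
      (aux_bound φ hφ1 hφpos (c n)).trans (pow_le_pow_left₀ (norm_nonneg _) (hK n) 2)
    calc Real.sqrt (φ (star (c n) * c n)).re ≤ Real.sqrt (K^2) := Real.sqrt_le_sqrt hb
      _ = K := Real.sqrt_sq hK0
  · have h := aux_sqrt_t (l := (ω : Filter ℕ)) _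
      ((aux_t1 _ _ (fun n => (hφpos (y n)).2)).mp hy.2.1)
    simpa using h.const_mul K

lemma aux_le_of_sq (s t : ℝ) (hs : 0 ≤ s) (ht : 0 ≤ t)
    (h : s ≤ Real.sqrt s * Real.sqrt t) : s ≤ t := by
  nlinarith [sq_nonneg (Real.sqrt s - Real.sqrt t), Real.sq_sqrt hs, Real.sq_sqrt ht]

lemma aux_half (hφ1 : φ 1 = 1)
    (hφpos : ∀ x : M, 0 ≤ (φ (star x * x)).re ∧ (φ (star x * x)).im = 0)
    (u v : M) (h : φ (star u * u) = φ (star u * v)) :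
    (φ (star u * u)).re ≤ (φ (star v * v)).re := by
  apply aux_le_of_sq _ _ (hφpos u).1 (hφpos v).1
  calc (φ (star u * u)).re ≤ ‖φ (star u * v)‖ := by
        rw [← h]; exact Complex.re_le_norm _
    _ ≤ Real.sqrt (φ (star u * u)).re * Real.sqrt (φ (star v * v)).re := aux_cs' φ hφ1 hφpos u v

lemma aux_half' (hφ1 : φ 1 = 1)
    (hφpos : ∀ x : M, 0 ≤ (φ (star x * x)).re ∧ (φ (star x * x)).im = 0)
    (u v : M) (h : φ (u * star u) = φ (v * star u)) :
    (φ (u * star u)).re ≤ (φ (v * star v)).re := by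
  have hs : 0 ≤ (φ (u * star u)).re := by simpa [star_star] using (hφpos (star u)).1
  have ht : 0 ≤ (φ (v * star v)).re := by simpa [star_star] using (hφpos (star v)).1
  apply aux_le_of_sq _ _ hs ht
  have hcs := aux_cs' φ hφ1 hφpos (star v) (star u)
  simp only [star_star] at hcs
  calc (φ (u * star u)).re ≤ ‖φ (v * star u)‖ := by
        rw [← h]; exact Complex.re_le_norm _
    _ ≤ Real.sqrt (φ (v * star v)).re * Real.sqrt (φ (u * star u)).re := hcs
    _ = Real.sqrt (φ (u * star u)).re * Real.sqrt (φ (v * star v)).re := mul_comm _ _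

lemma aux_prod (hφ1 : φ 1 = 1)
    (hφpos : ∀ x : M, 0 ≤ (φ (star x * x)).re ∧ (φ (star x * x)).im = 0)
    {y : ℕ → M} (hy : InIω φ ω y) : InIω φ ω (fun n => y n * star (y n)) := by
  obtain ⟨K, hK⟩ := hy.1
  have hK0 : 0 ≤ K := (norm_nonneg _).trans (hK 0)
  have key : Tendsto (fun n => (φ (star (y n * star (y n)) * (y n * star (y n)))).re)
      (ω : Filter ℕ) (nhds 0) := by
    apply squeeze_zero (fun n => (hφpos _).1)
      (g := fun n => K^2 * (φ (y n * star (y n))).re)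
    · intro n
      have h := aux_inq φ hφpos (star (y n)) (y n)
      have e : star (y n * star (y n)) * (y n * star (y n))
          = star (star (y n)) * (star (y n) * y n) * star (y n) := by
        simp [star_mul, star_star, mul_assoc]
      rw [e]
      refine h.trans ?_
      have e2 : star (star (y n)) * star (y n) = y n * star (y n) := by rw [star_star]
      rw [e2]
      apply mul_le_mul_of_nonneg_right _ (by simpa [star_star] using (hφpos (star (y n))).1)
      exact pow_le_pow_left₀ (norm_nonneg _) (hK n) 2
    · have h := (aux_t1 _ _
        (fun n => by simpa [star_star] using (hφpos (star (y n))).2)).mp hy.2.2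
      simpa using h.const_mul (K^2)
  have him : ∀ n, (φ (star (y n * star (y n)) * (y n * star (y n)))).im = 0 :=
    fun n => (hφpos _).2
  refine ⟨aux_bdd_mul hy.1 (aux_bdd_star hy.1), (aux_t1 _ _ him).mpr key, ?_⟩
  have e : (fun n => φ ((y n * star (y n)) * star (y n * star (y n))))
      = fun n => φ (star (y n * star (y n)) * (y n * star (y n))) := by
    funext n
    congr 1
    simp [star_mul, star_star, mul_assoc]
  rw [e]
  exact (aux_t1 _ _ him).mpr key

end Aux

/-- Let `Q ⊂ M` be a von Neumann subalgebra of a σ-finite von Neumann algebra with faithful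
normal conditional expectation `E_Q : M → Q`, and `ω` a nonprincipal ultrafilter on `ℕ`.
Then `(x_n)^ω ↦ (E_Q(x_n))^ω` is a well-defined faithful (normal) conditional expectation
`E_{Q^ω} : M^ω → Q^ω`, and `φ^ω ∘ E_{Q^ω} = φ^ω` for any faithful normal state `φ` with
`φ = φ ∘ E_Q`.  (Stated at the level of representing sequences: `E_Q` maps `𝓘_ω(M)` to
`𝓘_ω(Q)` and `𝓜^ω(M)` to `𝓜^ω(Q)`, the induced map is idempotent with range in `Q`,
is faithful, and is compatible with the ultraproduct state.) -/
theorem stmt_7 {M : Type*} [NormedRing M] [StarRing M] [CStarRing M] [CompleteSpace M]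
    [NormedAlgebra ℂ M] [StarModule ℂ M]
    (Q : StarSubalgebra ℂ M)
    (φ : M →ₗ[ℂ] ℂ) (hφ1 : φ 1 = 1)
    (hφpos : ∀ x : M, 0 ≤ (φ (star x * x)).re ∧ (φ (star x * x)).im = 0)
    (hφfaithful : ∀ x : M, φ (star x * x) = 0 → x = 0)
    (E : M →ₗ[ℂ] M)
    (hEQ : ∀ x : M, E x ∈ Q) (hEid : ∀ q ∈ Q, E q = q)
    (hEpos : ∀ x : M, ∃ y : M, E (star x * x) = star y * y)
    (hEmod : ∀ q₁ ∈ Q, ∀ q₂ ∈ Q, ∀ x : M, E (q₁ * x * q₂) = q₁ * E x * q₂)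
    (hEnorm : ∀ x : M, ‖E x‖ ≤ ‖x‖)
    (hφE : ∀ x : M, φ (E x) = φ x)
    (ω : Ultrafilter ℕ) (hω : ∀ n : ℕ, (ω : Filter ℕ) ≠ pure n) :
    -- `E_Q` maps `𝓘_ω(M)` into `𝓘_ω(Q)`
    (∀ x : ℕ → M, InIω φ ω x → InIω φ ω (fun n => E (x n))) ∧
    -- `E_Q` maps `𝓜^ω(M)` into `𝓜^ω(Q)`, so `E_{Q^ω}` is well defined on `M^ω`
    (∀ x : ℕ → M, InMω φ ω x → InMω φ ω (fun n => E (x n))) ∧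
    -- `E_{Q^ω}` is a conditional expectation onto `Q^ω`: range in `Q`, identity on `Q`
    (∀ x : ℕ → M, ∀ n, E (x n) ∈ Q) ∧ (∀ x : ℕ → M, (∀ n, x n ∈ Q) → ∀ n, E (x n) = x n) ∧
    -- `E_{Q^ω}` is faithful
    (∀ x : ℕ → M, InMω φ ω x →
      InIω φ ω (fun n => E (star (x n) * x n)) → InIω φ ω x) ∧
    -- `φ^ω ∘ E_{Q^ω} = φ^ω`
    (∀ x : ℕ → M, BddSeq x →
      Tendsto (fun n => φ (E (x n)) - φ (x n)) (ω : Filter ℕ) (nhds 0)) := by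
  have him : ∀ z : M, (φ (star z * z)).im = 0 := fun z => (hφpos z).2
  have hre : ∀ z : M, 0 ≤ (φ (star z * z)).re := fun z => (hφpos z).1
  have him' : ∀ z : M, (φ (z * star z)).im = 0 := fun z => by
    simpa [star_star] using him (star z)
  have hre' : ∀ z : M, 0 ≤ (φ (z * star z)).re := fun z => by
    simpa [star_star] using hre (star z)
  -- Part 1 : `E` maps `𝓘_ω` to `𝓘_ω`
  have hG1 : ∀ x : ℕ → M, InIω φ ω x → InIω φ ω (fun n => E (x n)) := by
    intro x hx
    obtain ⟨⟨K, hK⟩, h1, h2⟩ := hx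
    refine ⟨⟨K, fun n => (hEnorm _).trans (hK n)⟩, ?_, ?_⟩
    · rw [aux_t1 _ _ (fun n => him _)]
      refine squeeze_zero (fun n => hre _) (g := fun n => (φ (star (x n) * x n)).re) ?_
        ((aux_t1 _ _ (fun n => him _)).mp h1)
      intro n
      apply aux_half φ hφ1 hφpos
      have hmod := hEmod (star (E (x n))) (star_mem (hEQ (x n))) 1 (one_mem Q) (x n)
      rw [mul_one, mul_one] at hmod
      calc φ (star (E (x n)) * E (x n)) = φ (E (star (E (x n)) * x n)) := by rw [hmod]
        _ = φ (star (E (x n)) * x n) := hφE _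
    · rw [aux_t1 _ _ (fun n => him' _)]
      refine squeeze_zero (fun n => hre' _) (g := fun n => (φ (x n * star (x n))).re) ?_
        ((aux_t1 _ _ (fun n => him' _)).mp h2)
      intro n
      apply aux_half' φ hφ1 hφpos
      have hmod := hEmod 1 (one_mem Q) (star (E (x n))) (star_mem (hEQ (x n))) (x n)
      rw [one_mul, one_mul] at hmod
      calc φ (E (x n) * star (E (x n))) = φ (E (x n * star (E (x n)))) := by rw [hmod]
        _ = φ (x n * star (E (x n))) := hφE _
  -- Part 2 : `E` maps `𝓜^ω` to `𝓜^ω`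
  have hG2 : ∀ x : ℕ → M, InMω φ ω x → InMω φ ω (fun n => E (x n)) := by
    intro x hx
    obtain ⟨⟨K, hK⟩, hmul⟩ := hx
    have hcB : BddSeq (fun n => E (x n)) := ⟨K, fun n => (hEnorm _).trans (hK n)⟩
    refine ⟨hcB, ?_⟩
    intro y hy
    constructor
    · -- `(E x) y ∈ 𝓘_ω`
      refine ⟨aux_bdd_mul hcB hy.1, ?_, ?_⟩
      · rw [aux_t1 _ _ (fun n => him _)]
        refine squeeze_zero (fun n => hre _)
          (g := fun n => K^2 * (φ (star (y n) * y n)).re) ?_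
          (by simpa using ((aux_t1 _ _ (fun n => him _)).mp hy.2.1).const_mul (K^2))
        intro n
        have h := aux_inq φ hφpos (y n) (E (x n))
        have e : star (E (x n) * y n) * (E (x n) * y n)
            = star (y n) * (star (E (x n)) * E (x n)) * y n := by
          simp [star_mul, mul_assoc]
        rw [e]
        refine h.trans ?_
        apply mul_le_mul_of_nonneg_right _ (hre _)
        exact pow_le_pow_left₀ (norm_nonneg _) ((hEnorm _).trans (hK n)) 2
      · -- hard half, uses `x ∈ 𝓜^ω`
        have hhI : InIω φ ω (fun n => y n * star (y n)) := aux_prod φ ω hφ1 hφpos hy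
        have hgI : InIω φ ω (fun n => E (y n * star (y n))) := hG1 _ hhI
        have huI : InIω φ ω (fun n => x n * E (y n * star (y n))) := (hmul _ hgI).1
        have key : ∀ n, φ ((E (x n) * y n) * star (E (x n) * y n))
            = φ ((x n * E (y n * star (y n))) * star (E (x n))) := by
          intro n
          have e0 : (E (x n) * y n) * star (E (x n) * y n)
              = E (x n) * ((y n * star (y n)) * star (E (x n))) := by
            simp [star_mul, mul_assoc]
          have m1 := hEmod (E (x n)) (hEQ (x n)) 1 (one_mem Q)
            ((y n * star (y n)) * star (E (x n)))
          rw [mul_one, mul_one] at m1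
          have m2 := hEmod 1 (one_mem Q) (star (E (x n))) (star_mem (hEQ (x n)))
            (y n * star (y n))
          rw [one_mul, one_mul] at m2
          have m3 := hEmod 1 (one_mem Q) (E (y n * star (y n)) * star (E (x n)))
            (mul_mem (hEQ _) (star_mem (hEQ (x n)))) (x n)
          rw [one_mul, one_mul] at m3
          calc φ ((E (x n) * y n) * star (E (x n) * y n))
              = φ (E (x n) * ((y n * star (y n)) * star (E (x n)))) := by rw [e0]
            _ = φ (E (E (x n) * ((y n * star (y n)) * star (E (x n))))) := (hφE _).symm
            _ = φ (E (x n) * E ((y n * star (y n)) * star (E (x n)))) := by rw [m1]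
            _ = φ (E (x n) * (E (y n * star (y n)) * star (E (x n)))) := by rw [m2]
            _ = φ (E (x n * (E (y n * star (y n)) * star (E (x n))))) := by rw [← m3]
            _ = φ (x n * (E (y n * star (y n)) * star (E (x n)))) := hφE _
            _ = φ ((x n * E (y n * star (y n))) * star (E (x n))) := by rw [mul_assoc]
        have efun : (fun n => φ ((E (x n) * y n) * star (E (x n) * y n)))
            = fun n => φ ((x n * E (y n * star (y n))) * star (E (x n))) := funext key
        rw [efun]
        exact aux_right φ ω hφ1 hφpos huI hcB
    · -- `y (E x) ∈ 𝓘_ω`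
      refine ⟨aux_bdd_mul hy.1 hcB, ?_, ?_⟩
      · -- hard half
        have hsyI : InIω φ ω (fun n => star (y n) * y n) := by
          have h' := aux_prod φ ω hφ1 hφpos (aux_Iω_star φ ω hy)
          simpa [star_star] using h'
        have hg'I : InIω φ ω (fun n => E (star (y n) * y n)) := hG1 _ hsyI
        have hu'I : InIω φ ω (fun n => E (star (y n) * y n) * x n) := (hmul _ hg'I).2
        have key : ∀ n, φ (star (y n * E (x n)) * (y n * E (x n)))
            = φ (star (E (x n)) * (E (star (y n) * y n) * x n)) := by
          intro n
          have e0 : star (y n * E (x n)) * (y n * E (x n))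
              = star (E (x n)) * (star (y n) * y n) * E (x n) := by
            simp [star_mul, mul_assoc]
          have m1 := hEmod (star (E (x n))) (star_mem (hEQ (x n))) (E (x n)) (hEQ (x n))
            (star (y n) * y n)
          have m2 := hEmod (star (E (x n)) * E (star (y n) * y n))
            (mul_mem (star_mem (hEQ (x n))) (hEQ _)) 1 (one_mem Q) (x n)
          rw [mul_one, mul_one] at m2
          calc φ (star (y n * E (x n)) * (y n * E (x n)))
              = φ (star (E (x n)) * (star (y n) * y n) * E (x n)) := by rw [e0]
            _ = φ (E (star (E (x n)) * (star (y n) * y n) * E (x n))) := (hφE _).symm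
            _ = φ (star (E (x n)) * E (star (y n) * y n) * E (x n)) := by rw [m1]
            _ = φ (E (star (E (x n)) * E (star (y n) * y n) * x n)) := by rw [m2]
            _ = φ (star (E (x n)) * E (star (y n) * y n) * x n) := hφE _
            _ = φ (star (E (x n)) * (E (star (y n) * y n) * x n)) := by rw [mul_assoc]
        have efun : (fun n => φ (star (y n * E (x n)) * (y n * E (x n))))
            = fun n => φ (star (E (x n)) * (E (star (y n) * y n) * x n)) := funext key
        rw [efun]
        exact aux_left φ ω hφ1 hφpos hu'I hcB
      · rw [aux_t1 _ _ (fun n => him' _)]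
        refine squeeze_zero (fun n => hre' _)
          (g := fun n => K^2 * (φ (y n * star (y n))).re) ?_
          (by simpa using ((aux_t1 _ _ (fun n => him' _)).mp hy.2.2).const_mul (K^2))
        intro n
        have h := aux_inq φ hφpos (star (y n)) (star (E (x n)))
        simp only [star_star, norm_star] at h
        have e : (y n * E (x n)) * star (y n * E (x n))
            = y n * (E (x n) * star (E (x n))) * star (y n) := by
          simp [star_mul, mul_assoc]
        rw [e]
        refine h.trans ?_
        apply mul_le_mul_of_nonneg_right _ (hre' _)
        exact pow_le_pow_left₀ (norm_nonneg _) ((hEnorm _).trans (hK n)) 2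
  -- Part 5 : faithfulness
  have hG5 : ∀ x : ℕ → M, InMω φ ω x →
      InIω φ ω (fun n => E (star (x n) * x n)) → InIω φ ω x := by
    intro x hx hEI
    obtain ⟨⟨K, hK⟩, hmul⟩ := hx
    have hK0 : 0 ≤ K := (norm_nonneg _).trans (hK 0)
    have c1 : Tendsto (fun n => φ (star (x n) * x n)) (ω : Filter ℕ) (nhds 0) := by
      have h := aux_Iω_phi φ ω hφ1 hφpos hEI
      simpa only [hφE] using h
    have hyI : InIω φ ω (fun n => star (x n) * x n) := by
      have key : Tendsto (fun n => (φ (star (star (x n) * x n) * (star (x n) * x n))).re)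
          (ω : Filter ℕ) (nhds 0) := by
        refine squeeze_zero (fun n => hre _)
          (g := fun n => K^2 * (φ (star (x n) * x n)).re) ?_
          (by simpa using ((aux_t1 _ _ (fun n => him _)).mp c1).const_mul (K^2))
        intro n
        have h := aux_inq φ hφpos (x n) (star (x n))
        have e : star (star (x n) * x n) * (star (x n) * x n)
            = star (x n) * (star (star (x n)) * star (x n)) * x n := by
          simp [star_mul, star_star, mul_assoc]
        rw [e]
        refine h.trans ?_
        apply mul_le_mul_of_nonneg_right _ (hre _)
        rw [norm_star]
        exact pow_le_pow_left₀ (norm_nonneg _) (hK n) 2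
      have himy : ∀ n, (φ (star (star (x n) * x n) * (star (x n) * x n))).im = 0 :=
        fun n => him _
      refine ⟨aux_bdd_mul (aux_bdd_star ⟨K, hK⟩) ⟨K, hK⟩, (aux_t1 _ _ himy).mpr key, ?_⟩
      have e : (fun n => φ ((star (x n) * x n) * star (star (x n) * x n)))
          = fun n => φ (star (star (x n) * x n) * (star (x n) * x n)) := by
        funext n
        congr 1
        simp [star_mul, star_star, mul_assoc]
      rw [e]
      exact (aux_t1 _ _ himy).mpr key
    have hwI : InIω φ ω (fun n => x n * (star (x n) * x n)) := (hmul _ hyI).1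
    have c2 : Tendsto (fun n => φ (x n * star (x n))) (ω : Filter ℕ) (nhds 0) := by
      apply aux_t2 _ (fun n => Real.sqrt (φ (star (x n * star (x n)) * (x n * star (x n)))).re)
        (fun n => aux_abs φ hφ1 hφpos _)
      apply aux_sqrt_t
      refine squeeze_zero (fun n => hre _)
        (g := fun n => ‖φ ((x n * (star (x n) * x n)) * star (x n))‖) ?_ ?_
      · intro n
        have e : star (x n * star (x n)) * (x n * star (x n))
            = (x n * (star (x n) * x n)) * star (x n) := by
          simp [star_mul, star_star, mul_assoc]
        rw [e]
        exact Complex.re_le_norm _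
      · exact tendsto_zero_iff_norm_tendsto_zero.mp (aux_right φ ω hφ1 hφpos hwI ⟨K, hK⟩)
    exact ⟨⟨K, hK⟩, c1, c2⟩
  -- Part 6 : state compatibility
  have hG6 : ∀ x : ℕ → M, BddSeq x →
      Tendsto (fun n => φ (E (x n)) - φ (x n)) (ω : Filter ℕ) (nhds 0) := by
    intro x _
    have e : (fun n => φ (E (x n)) - φ (x n)) = fun _ => (0 : ℂ) := by
      funext n; rw [hφE, sub_self]
    rw [e]
    exact tendsto_const_nhds
  exact ⟨hG1, hG2, fun x n => hEQ _, fun x hx n => hEid _ (hx n), hG5, hG6⟩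
end

section
/- Let R be an ergodic nonsingular equivalence relation on a standard probability space (X, μ), A = L^∞(X) ⊂ M = L(R) the associated Cartan subalgebra inclusion, and ω a nonprincipal ultrafilter on ℕ. If A^ω is maximal abelian in M^ω and the center 𝒵(M^ω) is nontrivial, then M' ∩ A^ω ≠ ℂ1, and hence R is not strongly ergodic. In particular, every ergodic nonsingular equivalence relation of type III₀ fails to be strongly ergodic. -/
/-- Let `R` play the role of the ultrapower `M^ω` of `M = L(𝓡)` for an ergodic nonsingular
equivalence relation `𝓡` on `(X, μ)`, with `A ⊆ R` the image of the Cartan ultrapower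
`A^ω = L^∞(X)^ω` and `M₀ ⊆ R` the copy of `M`.  If `A` is maximal abelian in `R` and the
center `𝒵(R)` is nontrivial, then `M₀' ∩ A ≠ ℂ1`; consequently (via the characterization
`hchar` of strong ergodicity: `𝓡` strongly ergodic iff `M' ∩ A^ω = ℂ1`) the relation `𝓡` is
not strongly ergodic.  In particular (taking for the center hypothesis the Ando–Haagerup
theorem `𝒵(M^ω) ≠ ℂ1` for type III₀ factors), ergodic nonsingular equivalence relations of
type III₀ are never strongly ergodic. -/
theorem stmt_14 {R : Type*} [Ring R] [Algebra ℂ R]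
    (Nset A M₀ : Set R)
    (hA : A ⊆ Nset)
    (habel : ∀ a ∈ A, ∀ b ∈ A, a * b = b * a)
    -- `A` is maximal abelian in `N = M^ω`
    (hmax : {x | x ∈ Nset ∧ ∀ a ∈ A, a * x = x * a} = A)
    (hM : M₀ ⊆ Nset)
    -- the center of `N = M^ω` is nontrivial
    (hZ : ∃ z ∈ Nset, (∀ y ∈ Nset, z * y = y * z) ∧ ¬∃ c : ℂ, z = algebraMap ℂ R c)
    -- `P` is the statement "`𝓡` is strongly ergodic", characterized by `M' ∩ A^ω = ℂ1`
    (P : Prop)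
    (hchar : P → ∀ z ∈ A, (∀ x ∈ M₀, z * x = x * z) → ∃ c : ℂ, z = algebraMap ℂ R c) :
    (∃ z ∈ A, (∀ x ∈ M₀, z * x = x * z) ∧ ¬∃ c : ℂ, z = algebraMap ℂ R c) ∧ ¬P := by
  obtain ⟨z, hzN, hzc, hznc⟩ := hZ
  have hzA : z ∈ A := by
    rw [← hmax]
    exact ⟨hzN, fun a ha => (hzc a (hA ha)).symm⟩
  have hcomm : ∀ x ∈ M₀, z * x = x * z := fun x hx => hzc x (hM hx)
  refine ⟨⟨z, hzA, hcomm, hznc⟩, fun hP => hznc (hchar hP z hzA hcomm)⟩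
end

section
/- Let R be a strongly ergodic nonsingular equivalence relation on a standard probability space (X, μ), with A = L^∞(X) ⊂ M = L(R), canonical expectation E_A : M → A, faithful state φ = τ ∘ E_A. Suppose (u_n) is a sequence of unitaries in M such that ‖u_nφ − φu_n‖ → 0, ‖xu_n − u_nx‖_φ → 0 for all x ∈ M, and u_n → 0 σ-weakly. Then ‖E_A(u_n)‖_φ → 0. -/
open Filter

/-- The `L²`-seminorm `‖x‖_φ = φ(x* x)^{1/2}` associated with a state `φ`. -/
noncomputable def phiNorm {M : Type*} [NormedRing M] [StarRing M] [NormedAlgebra ℂ M]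
    (φ : M →ₗ[ℂ] ℂ) (x : M) : ℝ :=
  Real.sqrt ((φ (star x * x)).re)

section aux

variable {M : Type*} [NormedRing M] [StarRing M] [CStarRing M] [CompleteSpace M]
    [NormedAlgebra ℂ M] [StarModule ℂ M]
    (φ : M →ₗ[ℂ] ℂ)
    (hpos : ∀ x : M, 0 ≤ (φ (star x * x)).re ∧ (φ (star x * x)).im = 0)

include hpos

lemma phi_herm (x y : M) :
    φ (star y * x) = (starRingEnd ℂ) (φ (star x * y)) := by
  have expand1 : star (x + y) * (x + y)
      = star x * x + (star x * y + star y * x) + star y * y := by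
    rw [star_add, add_mul, mul_add, mul_add]; abel
  have e1 : (φ (star x * y) + φ (star y * x)).im = 0 := by
    have h := (hpos (x + y)).2
    rw [expand1, map_add, map_add, map_add] at h
    simp only [Complex.add_im, (hpos x).2, (hpos y).2, zero_add, add_zero] at h
    exact h
  have expand2 : star (x + Complex.I • y) * (x + Complex.I • y)
      = star x * x + (Complex.I • (star x * y) + (-Complex.I) • (star y * x))
        + star y * y := by
    rw [star_add, star_smul]
    rw [add_mul, mul_add, mul_add, smul_mul_assoc, mul_smul_comm, smul_mul_assoc,
      mul_smul_comm, smul_smul]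
    simp [Complex.star_def, Complex.conj_I, neg_smul]
    abel
  have e2 : (Complex.I * φ (star x * y) - Complex.I * φ (star y * x)).im = 0 := by
    have h := (hpos (x + Complex.I • y)).2
    rw [expand2, map_add, map_add, map_add, map_smul, map_smul] at h
    simp only [Complex.add_im, (hpos x).2, (hpos y).2, zero_add, add_zero,
      smul_eq_mul, neg_mul, neg_smul, Complex.neg_im, sub_eq_add_neg] at h ⊢
    exact h
  set a := φ (star x * y)
  set b := φ (star y * x)
  have h1 : a.im + b.im = 0 := by simpa [Complex.add_im] using e1
  have h2 : a.re - b.re = 0 := by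
    have := e2
    simp only [Complex.sub_im, Complex.mul_im, Complex.I_re, Complex.I_im] at this
    linarith
  apply Complex.ext <;> simp [Complex.conj_re, Complex.conj_im] <;> linarith

lemma phi_star (y : M) : φ (star y) = (starRingEnd ℂ) (φ y) := by
  have h := phi_herm φ hpos y 1
  simp only [star_one, one_mul, mul_one] at h
  have h2 := congrArg (starRingEnd ℂ) h
  simpa using h2.symm

end aux

section aux2

set_option linter.unusedSectionVars false

variable {M : Type*} [NormedRing M] [StarRing M] [CStarRing M] [CompleteSpace M]
    [NormedAlgebra ℂ M] [StarModule ℂ M]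
    (φ : M →ₗ[ℂ] ℂ)
    (hpos : ∀ x : M, 0 ≤ (φ (star x * x)).re ∧ (φ (star x * x)).im = 0)

include hpos

lemma phiNorm_nonneg (x : M) : 0 ≤ phiNorm φ x := Real.sqrt_nonneg _

lemma phiNorm_sq (x : M) : phiNorm φ x ^ 2 = (φ (star x * x)).re := by
  rw [phiNorm, Real.sq_sqrt (hpos x).1]

lemma phiNorm_zero : phiNorm φ (0 : M) = 0 := by simp [phiNorm]

lemma phiNorm_smul (c : ℂ) (x : M) : phiNorm φ (c • x) = ‖c‖ * phiNorm φ x := by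
  have h1 : star (c • x) * (c • x) = ((starRingEnd ℂ) c * c) • (star x * x) := by
    rw [star_smul, smul_mul_assoc, mul_smul_comm, smul_smul]
    rfl
  have hc : (starRingEnd ℂ) c * c = ((‖c‖ ^ 2 : ℝ) : ℂ) := by
    rw [mul_comm, Complex.mul_conj, Complex.normSq_eq_norm_sq]
  rw [phiNorm, h1, map_smul, hc]
  simp only [smul_eq_mul, Complex.mul_re, Complex.ofReal_re, Complex.ofReal_im, zero_mul, sub_zero]
  rw [phiNorm, Real.sqrt_mul (by positivity), Real.sqrt_sq (norm_nonneg c)]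

/-- Cauchy-Schwarz for the state `φ`. -/
lemma phi_cs (x y : M) : ‖φ (star x * y)‖ ≤ phiNorm φ x * phiNorm φ y := by
  by_cases ha : φ (star x * y) = 0
  · rw [ha, norm_zero]
    exact mul_nonneg (phiNorm_nonneg φ hpos x) (phiNorm_nonneg φ hpos y)
  set a := φ (star x * y) with ha_def
  have hanorm : (0:ℝ) < ‖a‖ := norm_pos_iff.mpr ha
  set c : ℂ := (starRingEnd ℂ) a / (‖a‖ : ℂ) with hc_def
  have hca : c * a = (‖a‖ : ℂ) := by
    rw [hc_def, div_mul_eq_mul_div, mul_comm ((starRingEnd ℂ) a) a, Complex.mul_conj,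
      Complex.normSq_eq_norm_sq]
    push_cast
    rw [pow_two]
    field_simp
  have hcnorm : ‖c‖ = 1 := by
    rw [hc_def, norm_div]
    rw [starRingEnd_apply, norm_star, Complex.norm_real, Real.norm_eq_abs,
      abs_of_nonneg (norm_nonneg a), div_self hanorm.ne']
  -- quadratic in t
  have key : ∀ t : ℝ, 0 ≤ (φ (star y * y)).re * (t * t) + (2 * ‖a‖) * t
      + (φ (star x * x)).re := by
    intro t
    have h0 := (hpos (x + ((t : ℂ) * c) • y)).1
    set d : ℂ := (t : ℂ) * c with hd_def
    have expand : star (x + d • y) * (x + d • y)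
        = star x * x + (d • (star x * y) + (starRingEnd ℂ) d • (star y * x))
          + ((starRingEnd ℂ) d * d) • (star y * y) := by
      rw [star_add, star_smul, add_mul, mul_add, mul_add, smul_mul_assoc, mul_smul_comm,
        smul_mul_assoc, mul_smul_comm, smul_smul]
      abel
    rw [expand, map_add, map_add, map_add, map_smul, map_smul, map_smul] at h0
    have hherm : φ (star y * x) = (starRingEnd ℂ) a := phi_herm φ hpos x y
    have hda : (d * a + (starRingEnd ℂ) d * (starRingEnd ℂ) a).re = 2 * ‖a‖ * t := by
      rw [← map_mul]
      have hdda : d * a = (t : ℂ) * (‖a‖ : ℂ) := by rw [hd_def, mul_assoc, hca]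
      rw [hdda]
      simp [Complex.add_re, Complex.mul_re]
      ring
    have hdd : ((starRingEnd ℂ) d * d) = ((t * t : ℝ) : ℂ) := by
      rw [mul_comm, Complex.mul_conj, Complex.normSq_eq_norm_sq]
      rw [hd_def, norm_mul, hcnorm, mul_one, Complex.norm_real, Real.norm_eq_abs]
      norm_cast
      rw [pow_two, abs_mul_abs_self]
    simp only [Complex.add_re, smul_eq_mul] at h0
    rw [hherm] at h0
    calc (0:ℝ) ≤ _ := h0
    _ = (φ (star y * y)).re * (t * t) + (2 * ‖a‖) * t + (φ (star x * x)).re := by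
        rw [← hda, hdd]
        simp only [Complex.mul_re, Complex.ofReal_re, Complex.ofReal_im, zero_mul, sub_zero,
          Complex.add_re]
        ring
  have hdisc := discrim_le_zero key
  rw [discrim] at hdisc
  have h2 : ‖a‖ ^ 2 ≤ (φ (star x * x)).re * (φ (star y * y)).re := by nlinarith
  calc ‖a‖ = Real.sqrt (‖a‖ ^ 2) := (Real.sqrt_sq (norm_nonneg a)).symm
  _ ≤ Real.sqrt ((φ (star x * x)).re * (φ (star y * y)).re) := Real.sqrt_le_sqrt h2
  _ = phiNorm φ x * phiNorm φ y := Real.sqrt_mul (hpos x).1 _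

end aux2

section aux3

set_option linter.unusedSectionVars false

variable {M : Type*} [NormedRing M] [StarRing M] [CStarRing M] [CompleteSpace M]
    [NormedAlgebra ℂ M] [StarModule ℂ M]
    (φ : M →ₗ[ℂ] ℂ)
    (hpos : ∀ x : M, 0 ≤ (φ (star x * x)).re ∧ (φ (star x * x)).im = 0)

include hpos

lemma phi_abs_le (hφ1 : φ 1 = 1) (y : M) : ‖φ y‖ ≤ phiNorm φ y := by
  have h := phi_cs φ hpos 1 y
  have h1 : phiNorm φ (1 : M) = 1 := by
    rw [phiNorm]
    simp [hφ1]
  rw [star_one, one_mul, h1, one_mul] at h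
  exact h

lemma phiNorm_add_le (x y : M) : phiNorm φ (x + y) ≤ phiNorm φ x + phiNorm φ y := by
  have expand1 : star (x + y) * (x + y)
      = star x * x + (star x * y + star y * x) + star y * y := by
    rw [star_add, add_mul, mul_add, mul_add]; abel
  have hherm := phi_herm φ hpos x y
  have hq : (φ (star (x + y) * (x + y))).re
      = (φ (star x * x)).re + 2 * (φ (star x * y)).re + (φ (star y * y)).re := by
    rw [expand1, map_add, map_add, map_add, hherm]
    simp only [Complex.add_re, Complex.conj_re]
    ring
  have hcross : (φ (star x * y)).re ≤ phiNorm φ x * phiNorm φ y := by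
    calc (φ (star x * y)).re ≤ ‖φ (star x * y)‖ := Complex.re_le_norm _
    _ ≤ phiNorm φ x * phiNorm φ y := phi_cs φ hpos x y
  have hle : (φ (star (x + y) * (x + y))).re ≤ (phiNorm φ x + phiNorm φ y) ^ 2 := by
    rw [hq]
    have hx2 := phiNorm_sq φ hpos x
    have hy2 := phiNorm_sq φ hpos y
    nlinarith
  calc phiNorm φ (x + y) = Real.sqrt ((φ (star (x + y) * (x + y))).re) := rfl
  _ ≤ Real.sqrt ((phiNorm φ x + phiNorm φ y) ^ 2) := Real.sqrt_le_sqrt hle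
  _ = phiNorm φ x + phiNorm φ y := Real.sqrt_sq
      (add_nonneg (phiNorm_nonneg φ hpos x) (phiNorm_nonneg φ hpos y))

lemma phiNorm_neg (x : M) : phiNorm φ (-x) = phiNorm φ x := by
  have : -x = ((-1 : ℂ)) • x := by simp
  rw [this, phiNorm_smul φ hpos]
  simp

lemma phi_nonneg_of_nonneg [PartialOrder M] [StarOrderedRing M] (w : M) (hw : 0 ≤ w) :
    0 ≤ (φ w).re ∧ (φ w).im = 0 := by
  rw [StarOrderedRing.nonneg_iff] at hw
  induction hw using AddSubmonoid.closure_induction with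
  | mem x hx =>
    obtain ⟨s, rfl⟩ := hx
    exact hpos s
  | zero => simp
  | add x y _ _ hx hy =>
    rw [map_add]
    constructor
    · simp only [Complex.add_re]
      exact add_nonneg hx.1 hy.1
    · simp only [Complex.add_im, hx.2, hy.2, add_zero]

lemma phi_smul_re (r : ℝ) (y : M) : (φ (r • y)).re = r * (φ y).re := by
  have : (r : ℝ) • y = ((r : ℂ)) • y := by
    rw [← algebraMap_smul ℂ r y]
    norm_cast
  rw [this, map_smul]
  simp [Complex.smul_re]

lemma phiNorm_le_norm [PartialOrder M] [StarOrderedRing M] (hφ1 : φ 1 = 1) (v : M) :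
    phiNorm φ v ≤ ‖v‖ := by
  letI : CStarAlgebra M := {}
  have h : star v * v ≤ algebraMap ℝ M ‖star v * v‖ :=
    IsSelfAdjoint.le_algebraMap_norm_self (IsSelfAdjoint.star_mul_self v)
  have h2 := (phi_nonneg_of_nonneg φ hpos _ (sub_nonneg.mpr h)).1
  rw [map_sub] at h2
  have h3 : (φ (algebraMap ℝ M ‖star v * v‖)).re = ‖star v * v‖ := by
    rw [Algebra.algebraMap_eq_smul_one, phi_smul_re φ hpos, hφ1]
    simp
  have h4 : (φ (star v * v)).re ≤ ‖star v * v‖ := by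
    simp only [Complex.sub_re] at h2
    linarith [h2, h3.le, h3.ge]
  calc phiNorm φ v ≤ Real.sqrt ‖star v * v‖ := Real.sqrt_le_sqrt h4
  _ = Real.sqrt (‖v‖ * ‖v‖) := by rw [CStarRing.norm_star_mul_self]
  _ = ‖v‖ := Real.sqrt_mul_self (norm_nonneg v)

lemma phiNorm_mul_le_left [PartialOrder M] [StarOrderedRing M] (b z : M) :
    phiNorm φ (b * z) ≤ ‖b‖ * phiNorm φ z := by
  letI : CStarAlgebra M := {}
  have h : star z * (star b * b) * z ≤ ‖star b * b‖ • (star z * z) :=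
    CStarAlgebra.star_left_conjugate_le_norm_smul (IsSelfAdjoint.star_mul_self b)
  have h2 := (phi_nonneg_of_nonneg φ hpos _ (sub_nonneg.mpr h)).1
  rw [map_sub] at h2
  have hsm : (φ (‖star b * b‖ • (star z * z))).re
      = ‖star b * b‖ * (φ (star z * z)).re := phi_smul_re φ hpos _ _
  have hassoc : star (b * z) * (b * z) = star z * (star b * b) * z := by
    rw [star_mul]
    noncomm_ring
  have h4 : (φ (star (b * z) * (b * z))).re ≤ (‖b‖ * ‖b‖) * (φ (star z * z)).re := by
    rw [hassoc]
    rw [CStarRing.norm_star_mul_self] at h2 hsm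
    simp only [Complex.sub_re] at h2
    linarith
  calc phiNorm φ (b * z) = Real.sqrt ((φ (star (b * z) * (b * z))).re) := rfl
  _ ≤ Real.sqrt ((‖b‖ * ‖b‖) * (φ (star z * z)).re) := Real.sqrt_le_sqrt h4
  _ = ‖b‖ * phiNorm φ z := by
      rw [Real.sqrt_mul (by positivity), Real.sqrt_mul_self (norm_nonneg b)]
      rfl

end aux3

section aux4

set_option linter.unusedSectionVars false

variable {M : Type*} [NormedRing M] [StarRing M] [CStarRing M] [CompleteSpace M]
    [NormedAlgebra ℂ M] [StarModule ℂ M]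
    (A : StarSubalgebra ℂ M) (habel : ∀ a ∈ A, ∀ b ∈ A, a * b = b * a)
    (E : M →ₗ[ℂ] M)
    (hEA : ∀ x : M, E x ∈ A) (hEid : ∀ a ∈ A, E a = a)
    (hEmod : ∀ a ∈ A, ∀ b ∈ A, ∀ x : M, E (a * x * b) = a * E x * b)
    (φ : M →ₗ[ℂ] ℂ)
    (hpos : ∀ x : M, 0 ≤ (φ (star x * x)).re ∧ (φ (star x * x)).im = 0)
    (hφE : ∀ x : M, φ (E x) = φ x)

include habel hEA hEid hEmod hpos hφE

lemma E_left (a : M) (ha : a ∈ A) (x : M) : E (a * x) = a * E x := by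
  have h := hEmod a ha 1 A.one_mem x
  simpa using h

lemma E_right (b : M) (hb : b ∈ A) (x : M) : E (x * b) = E x * b := by
  have h := hEmod 1 A.one_mem b hb x
  simpa using h

lemma E_contract (x : M) : phiNorm φ (E x) ≤ phiNorm φ x := by
  have key : φ (star (E x) * E x) = φ (star (E x) * x) := by
    have h1 : E (star (E x) * x) = star (E x) * E x :=
      E_left A habel E hEA hEid hEmod φ hpos hφE _ (star_mem (hEA x)) x
    rw [← hφE (star (E x) * x), h1]
  have hq : (φ (star (E x) * E x)).re ≤ phiNorm φ (E x) * phiNorm φ x := by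
    rw [key]
    calc (φ (star (E x) * x)).re ≤ ‖φ (star (E x) * x)‖ := Complex.re_le_norm _
    _ ≤ phiNorm φ (E x) * phiNorm φ x := phi_cs φ hpos (E x) x
  have h2 := phiNorm_sq φ hpos (E x)
  have h3 := phiNorm_nonneg φ hpos (E x)
  have h4 := phiNorm_nonneg φ hpos x
  nlinarith

/-- key identity : `‖z b‖_φ² = φ((b* b)(z* z)).re` for `b ∈ A`. -/
lemma r_sq (z b : M) (hb : b ∈ A) :
    φ (star (z * b) * (z * b)) = φ ((star b * b) * (star z * z)) := by
  have e1 : star (z * b) * (z * b) = star b * (star z * z) * b := by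
    rw [star_mul]; noncomm_ring
  have e2 : φ (star b * (star z * z) * b) = φ (star b * E (star z * z) * b) := by
    rw [← hEmod _ (star_mem hb) _ hb, hφE]
  have e3 : star b * E (star z * z) * b = (star b * b) * E (star z * z) := by
    rw [habel _ (star_mem hb) _ (hEA _), mul_assoc]
    exact habel _ (hEA _) _ (mul_mem (star_mem hb) hb)
  have e4 : φ ((star b * b) * E (star z * z)) = φ ((star b * b) * (star z * z)) := by
    have h5 : (star b * b) * E (star z * z) = E ((star b * b) * (star z * z)) := by
      rw [E_left A habel E hEA hEid hEmod φ hpos hφE _ (mul_mem (star_mem hb) hb)]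
    rw [h5, hφE]
  rw [e1, e2, e3, e4]

/-- right multiplication bound: `‖z b‖_φ ≤ ‖b‖ ‖z‖_φ` for `b ∈ A`. -/
lemma phiNorm_mul_le_right [PartialOrder M] [StarOrderedRing M]
    (hφ1 : φ 1 = 1) (hφfaithful : ∀ x : M, φ (star x * x) = 0 → x = 0)
    (z b : M) (hb : b ∈ A) :
    phiNorm φ (z * b) ≤ ‖b‖ * phiNorm φ z := by
  set ρ := phiNorm φ z with hρdef
  by_cases hρ0 : ρ = 0
  · -- then z = 0
    have hz : z = 0 := by
      apply hφfaithful
      have h1 : (φ (star z * z)).re = 0 := by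
        have h := Real.sqrt_eq_zero'.mp hρ0
        exact le_antisymm h (hpos z).1
      exact Complex.ext (by simpa using h1) (by simpa using (hpos z).2)
    rw [hz, zero_mul, hρ0, phiNorm_zero φ hpos, mul_zero]
  have hρpos : 0 < ρ := lt_of_le_of_ne (phiNorm_nonneg φ hpos z) (Ne.symm hρ0)
  -- the iteration
  set r : M → ℝ := fun d => phiNorm φ (z * d) with hrdef
  have hrnonneg : ∀ d, 0 ≤ r d := fun d => phiNorm_nonneg φ hpos (z * d)
  have hrbound : ∀ d, r d ≤ ‖z‖ * ‖d‖ := by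
    intro d
    calc r d ≤ ‖z * d‖ := phiNorm_le_norm φ hpos hφ1 (z * d)
    _ ≤ ‖z‖ * ‖d‖ := norm_mul_le z d
  have hcs_tool : ∀ w ∈ A, (φ (w * (star z * z))).re ≤ r (star w) * ρ := by
    intro w hw
    have e1 : w * (star z * z) = star (z * star w) * z := by
      rw [star_mul, star_star]; noncomm_ring
    calc (φ (w * (star z * z))).re ≤ ‖φ (w * (star z * z))‖ := Complex.re_le_norm _
    _ = ‖φ (star (z * star w) * z)‖ := by rw [e1]
    _ ≤ phiNorm φ (z * star w) * phiNorm φ z := phi_cs φ hpos _ _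
    _ = r (star w) * ρ := rfl
  have hkey : ∀ d ∈ A, r d ^ 2 ≤ r (star d * d) * ρ := by
    intro d hd
    have h1 : r d ^ 2 = (φ ((star d * d) * (star z * z))).re := by
      rw [hrdef]
      simp only
      rw [phiNorm_sq φ hpos]
      exact congrArg Complex.re (r_sq A habel E hEA hEid hEmod φ hpos hφE z d hd)
    rw [h1]
    have h2 := hcs_tool (star d * d) (mul_mem (star_mem hd) hd)
    have h3 : star (star d * d) = star d * d := by rw [star_mul, star_star]
    rw [h3] at h2
    exact h2
  -- conclude
  set c := star b * b with hcdef
  have hcA : c ∈ A := mul_mem (star_mem hb) hb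
  have hcsa : star c = c := by rw [hcdef, star_mul, star_star]
  have hcpowA : ∀ k : ℕ, c ^ k ∈ A := fun k => pow_mem hcA k
  have hcpowsa : ∀ k : ℕ, star (c ^ k) = c ^ k := by
    intro k
    rw [star_pow, hcsa]
  have hiter : ∀ k : ℕ, r b ^ (2 ^ (k + 1)) * ρ ≤ r (c ^ (2 ^ k)) * ρ ^ (2 ^ (k + 1)) := by
    intro k
    induction k with
    | zero =>
      have h1 := hkey b hb
      have := mul_le_mul_of_nonneg_right h1 (le_of_lt hρpos)
      calc r b ^ (2 ^ 1) * ρ = r b ^ 2 * ρ := by norm_num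
      _ ≤ (r (star b * b) * ρ) * ρ := mul_le_mul_of_nonneg_right h1 (le_of_lt hρpos)
      _ = r (c ^ 2 ^ 0) * ρ ^ 2 ^ 1 := by simp only [hcdef, pow_zero, pow_one]; ring
    | succ k ih =>
      have hY := hkey (c ^ (2 ^ k)) (hcpowA _)
      rw [hcpowsa] at hY
      have hexp : (2:ℕ) ^ (k + 1) = 2 ^ k + 2 ^ k := by rw [pow_succ]; ring
      have hYpow : c ^ (2 ^ k) * c ^ (2 ^ k) = c ^ (2 ^ (k + 1)) := by
        rw [← pow_add, hexp]
      rw [hYpow] at hY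
      have hexp2 : (2:ℕ) ^ (k + 2) = 2 ^ (k + 1) + 2 ^ (k + 1) := by rw [pow_succ]; ring
      have hpow : r b ^ (2 ^ (k + 2)) = (r b ^ (2 ^ (k + 1))) ^ 2 := by
        rw [← pow_mul, hexp2]; ring_nf
      have hpowr : ρ ^ (2 ^ (k + 2)) = (ρ ^ (2 ^ (k + 1))) ^ 2 := by
        rw [← pow_mul, hexp2]; ring_nf
      have hXnn : 0 ≤ r b ^ (2 ^ (k + 1)) := pow_nonneg (hrnonneg b) _
      have hsq : (r b ^ (2 ^ (k + 1)) * ρ) ^ 2 ≤ (r (c ^ (2 ^ k)) * ρ ^ (2 ^ (k + 1))) ^ 2 := by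
        apply pow_le_pow_left₀ (by positivity) ih
      have h2 : (r (c ^ (2 ^ k)) * ρ ^ (2 ^ (k + 1))) ^ 2
          ≤ (r (c ^ (2 ^ (k + 1))) * ρ) * (ρ ^ (2 ^ (k + 1))) ^ 2 := by
        have := mul_le_mul_of_nonneg_right hY (pow_nonneg (pow_nonneg hρpos.le (2 ^ (k+1))) 2)
        calc (r (c ^ (2 ^ k)) * ρ ^ (2 ^ (k + 1))) ^ 2
            = r (c ^ (2 ^ k)) ^ 2 * (ρ ^ (2 ^ (k + 1))) ^ 2 := by ring
        _ ≤ (r (c ^ (2 ^ (k + 1))) * ρ) * (ρ ^ (2 ^ (k + 1))) ^ 2 := this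
      apply le_of_mul_le_mul_right ?_ hρpos
      calc r b ^ 2 ^ (k + 1 + 1) * ρ * ρ = (r b ^ (2 ^ (k + 1)) * ρ) ^ 2 := by
            rw [hpow]; ring
      _ ≤ (r (c ^ (2 ^ (k + 1))) * ρ) * (ρ ^ (2 ^ (k + 1))) ^ 2 := le_trans hsq h2
      _ = r (c ^ (2 ^ (k + 1))) * ρ ^ 2 ^ (k + 1 + 1) * ρ := by rw [hpowr]; ring
  -- conclude by contradiction
  by_contra hcon
  push_neg at hcon
  have hrb0 : 0 ≤ r b := hrnonneg b
  have hbpos : 0 < ‖b‖ := by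
    rcases eq_or_ne b 0 with hb0 | hb0
    · exfalso
      rw [hb0, mul_zero, norm_zero, zero_mul, phiNorm_zero φ hpos] at hcon
      exact lt_irrefl 0 hcon
    · exact norm_pos_iff.mpr hb0
  have hcnorm : ‖c‖ = ‖b‖ * ‖b‖ := CStarRing.norm_star_mul_self
  have hβ : 0 < ‖b‖ * ρ := mul_pos hbpos hρpos
  have ht : 1 < r b / (‖b‖ * ρ) := (one_lt_div hβ).mpr hcon
  obtain ⟨m, hm⟩ := pow_unbounded_of_one_lt (‖z‖ / ρ) ht
  set n := 2 ^ (m + 1) with hn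
  have h1 : r b ^ n * ρ ≤ r (c ^ (2 ^ m)) * ρ ^ n := hiter m
  have hbn : ‖c‖ ^ 2 ^ m = ‖b‖ ^ n := by
    rw [hcnorm, ← pow_two, ← pow_mul, hn]
    congr 1
    rw [pow_succ]; ring
  have h2 : r (c ^ (2 ^ m)) ≤ ‖z‖ * ‖b‖ ^ n := by
    calc r (c ^ 2 ^ m) ≤ ‖z‖ * ‖c ^ 2 ^ m‖ := hrbound _
    _ ≤ ‖z‖ * ‖c‖ ^ 2 ^ m := by
        apply mul_le_mul_of_nonneg_left _ (norm_nonneg z)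
        exact norm_pow_le' c (pow_pos two_pos m)
    _ = ‖z‖ * ‖b‖ ^ n := by rw [hbn]
  have h3 : r b ^ n * ρ ≤ ‖z‖ * (‖b‖ ^ n * ρ ^ n) := by
    calc r b ^ n * ρ ≤ r (c ^ (2 ^ m)) * ρ ^ n := h1
    _ ≤ (‖z‖ * ‖b‖ ^ n) * ρ ^ n :=
        mul_le_mul_of_nonneg_right h2 (pow_nonneg hρpos.le n)
    _ = ‖z‖ * (‖b‖ ^ n * ρ ^ n) := by ring
  have h4 : (r b / (‖b‖ * ρ)) ^ n ≤ ‖z‖ / ρ := by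
    rw [div_pow, div_le_div_iff₀ (by positivity) hρpos]
    calc r b ^ n * ρ ≤ ‖z‖ * (‖b‖ ^ n * ρ ^ n) := h3
    _ = ‖z‖ * (‖b‖ * ρ) ^ n := by rw [mul_pow]
  have hmn : m ≤ n := by
    calc m ≤ 2 ^ m := (Nat.lt_two_pow_self).le
    _ ≤ 2 ^ (m + 1) := Nat.pow_le_pow_right (by norm_num) (Nat.le_succ m)
  have h5 : (r b / (‖b‖ * ρ)) ^ m ≤ (r b / (‖b‖ * ρ)) ^ n :=
    pow_le_pow_right₀ ht.le hmn
  linarith [hm.trans_le (h5.trans h4)]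

end aux4

/-- Let `𝓡` be a strongly ergodic nonsingular equivalence relation on `(X, μ)`, with
`A = L^∞(X) ⊂ M = L(𝓡)` the Cartan inclusion, `E = E_A : M → A` the canonical expectation,
`φ = τ ∘ E_A` and `G ⊂ M` the set of unitaries coming from the full group `[𝓡]` (which
normalize `E_A` and, together with `A`, span a σ-strongly dense subspace of `M`).
If `(u_n)` is a sequence of unitaries in `M` with `‖u_nφ − φu_n‖ → 0`,
`‖xu_n − u_nx‖_φ → 0` for all `x ∈ M`, and `u_n → 0` σ-weakly, then `‖E_A(u_n)‖_φ → 0`. -/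
theorem stmt_15 {M : Type*} [NormedRing M] [StarRing M] [CStarRing M] [CompleteSpace M]
    [NormedAlgebra ℂ M] [StarModule ℂ M]
    (A : StarSubalgebra ℂ M) (habel : ∀ a ∈ A, ∀ b ∈ A, a * b = b * a)
    (E : M →ₗ[ℂ] M)
    (hEA : ∀ x : M, E x ∈ A) (hEid : ∀ a ∈ A, E a = a)
    (hEmod : ∀ a ∈ A, ∀ b ∈ A, ∀ x : M, E (a * x * b) = a * E x * b)
    (hEnorm : ∀ x : M, ‖E x‖ ≤ ‖x‖)
    (φ : M →ₗ[ℂ] ℂ) (hφ1 : φ 1 = 1)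
    (hφpos : ∀ x : M, 0 ≤ (φ (star x * x)).re ∧ (φ (star x * x)).im = 0)
    (hφfaithful : ∀ x : M, φ (star x * x) = 0 → x = 0)
    (hφE : ∀ x : M, φ (E x) = φ x)
    -- the normalizing unitaries coming from the full group `[𝓡]`
    (G : Set M)
    (hG : ∀ g ∈ G, g ∈ unitary M ∧ ∀ x : M, g * E x * star g = E (g * x * star g))
    (hGinv : ∀ g ∈ G, star g ∈ G)
    -- `span {a u_g : a ∈ A, g ∈ G}` is dense in `M` for `‖·‖_φ`
    (hdense : ∀ (x : M) (ε : ℝ), 0 < ε →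
      ∃ y ∈ Submodule.span ℂ {z : M | ∃ a ∈ A, ∃ g ∈ G, z = a * g},
        phiNorm φ (x - y) < ε)
    -- strong ergodicity of `𝓡`: `L(𝓡)' ∩ A^ω = ℂ1` for every nonprincipal ultrafilter `ω`
    (hSE : ∀ ω : Ultrafilter ℕ, (∀ n : ℕ, (ω : Filter ℕ) ≠ pure n) →
      ∀ a : ℕ → M, (∃ K : ℝ, ∀ n, ‖a n‖ ≤ K) → (∀ n, a n ∈ A) →
      (∀ x : M, Tendsto (fun n => phiNorm φ (x * a n - a n * x)) (ω : Filter ℕ) (nhds 0)) →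
      ∃ c : ℂ, Tendsto (fun n => phiNorm φ (a n - algebraMap ℂ M c)) (ω : Filter ℕ) (nhds 0))
    -- the sequence of unitaries
    (u : ℕ → M) (hu : ∀ n, u n ∈ unitary M)
    -- (i)  `‖u_n φ − φ u_n‖ → 0`
    (h1 : Tendsto (fun n => ⨆ x : {x : M // ‖x‖ ≤ 1}, ‖φ ((x : M) * u n) - φ (u n * (x : M))‖)
      atTop (nhds 0))
    -- (ii)  `‖x u_n − u_n x‖_φ → 0` for all `x ∈ M`
    (h2 : ∀ x : M, Tendsto (fun n => phiNorm φ (x * u n - u n * x)) atTop (nhds 0))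
    -- (iii)  `u_n → 0` σ-weakly
    (h3 : ∀ a b : M, Tendsto (fun n => φ (a * u n * b)) atTop (nhds 0)) :
    Tendsto (fun n => phiNorm φ (E (u n))) atTop (nhds 0) := by
  classical
  letI : CStarAlgebra M := {}
  letI : PartialOrder M := CStarAlgebra.spectralOrder M
  letI : StarOrderedRing M := CStarAlgebra.spectralOrderedRing M
  have hNT : Nontrivial M := by
    refine nontrivial_of_ne 1 0 fun h => ?_
    have : (1 : ℂ) = 0 := by rw [← hφ1, h, map_zero]
    norm_num at this
  set a : ℕ → M := fun n => E (u n) with ha_def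
  have hanorm : ∀ n, ‖a n‖ ≤ 1 := fun n => (hEnorm (u n)).trans
    (le_of_eq (CStarRing.norm_of_mem_unitary (hu n)))
  -- commutation with unitaries from G
  have hgcomm : ∀ g ∈ G, Tendsto (fun n => phiNorm φ (g * a n - a n * g)) atTop (nhds 0) := by
    intro g hg
    obtain ⟨hgu, -⟩ := hG g hg
    have hsg := (hG (star g) (hGinv g hg)).2
    have hgg : g * star g = 1 := (Unitary.mem_iff.mp hgu).2
    have hgg' : star g * g = 1 := (Unitary.mem_iff.mp hgu).1
    have hid : ∀ n, g * a n - a n * g = g * E (u n - star g * u n * g) := by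
      intro n
      have hE2 : E (star g * u n * g) = star g * E (u n) * g := by
        have h := hsg (u n)
        rw [star_star] at h
        exact h.symm
      rw [map_sub, hE2, mul_sub, ha_def]
      simp only
      congr 1
      have h4 : g * (star g * E (u n) * g) = E (u n) * g := by
        calc g * (star g * E (u n) * g) = (g * star g) * (E (u n) * g) := by noncomm_ring
        _ = E (u n) * g := by rw [hgg, one_mul]
      rw [h4]
    have hid2 : ∀ n, u n - star g * u n * g = star g * (g * u n - u n * g) := by
      intro n
      rw [mul_sub, ← mul_assoc, ← mul_assoc, hgg', one_mul]
    have hbound : ∀ n, phiNorm φ (g * a n - a n * g)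
        ≤ (‖g‖ * ‖star g‖) * phiNorm φ (g * u n - u n * g) := by
      intro n
      rw [hid n]
      calc phiNorm φ (g * E (u n - star g * u n * g))
          ≤ ‖g‖ * phiNorm φ (E (u n - star g * u n * g)) :=
            phiNorm_mul_le_left φ hφpos g _
      _ ≤ ‖g‖ * phiNorm φ (u n - star g * u n * g) := by
          apply mul_le_mul_of_nonneg_left _ (norm_nonneg g)
          exact E_contract A habel E hEA hEid hEmod φ hφpos hφE _
      _ = ‖g‖ * phiNorm φ (star g * (g * u n - u n * g)) := by rw [hid2 n]
      _ ≤ ‖g‖ * (‖star g‖ * phiNorm φ (g * u n - u n * g)) := by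
          apply mul_le_mul_of_nonneg_left _ (norm_nonneg g)
          exact phiNorm_mul_le_left φ hφpos _ _
      _ = (‖g‖ * ‖star g‖) * phiNorm φ (g * u n - u n * g) := by ring
    have hlim : Tendsto (fun n => (‖g‖ * ‖star g‖) * phiNorm φ (g * u n - u n * g))
        atTop (nhds 0) := by
      have := (h2 g).const_mul (‖g‖ * ‖star g‖)
      simpa using this
    exact squeeze_zero (fun n => phiNorm_nonneg φ hφpos _) hbound hlim
  -- commutation with the span
  have hspan : ∀ y ∈ Submodule.span ℂ {z : M | ∃ a ∈ A, ∃ g ∈ G, z = a * g},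
      Tendsto (fun n => phiNorm φ (y * a n - a n * y)) atTop (nhds 0) := by
    intro y hy
    induction hy using Submodule.span_induction with
    | mem z hz =>
      obtain ⟨a0, ha0, g, hg, rfl⟩ := hz
      have hid : ∀ n, (a0 * g) * a n - a n * (a0 * g) = a0 * (g * a n - a n * g) := by
        intro n
        have hcom : a n * a0 = a0 * a n := habel _ (hEA (u n)) _ ha0
        calc (a0 * g) * a n - a n * (a0 * g) = a0 * (g * a n) - (a n * a0) * g := by
              noncomm_ring
        _ = a0 * (g * a n) - a0 * (a n * g) := by rw [hcom]; noncomm_ring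
        _ = a0 * (g * a n - a n * g) := by noncomm_ring
      have hbound : ∀ n, phiNorm φ ((a0 * g) * a n - a n * (a0 * g))
          ≤ ‖a0‖ * phiNorm φ (g * a n - a n * g) := by
        intro n
        rw [hid n]
        exact phiNorm_mul_le_left φ hφpos _ _
      have hlim := (hgcomm g hg).const_mul ‖a0‖
      simp only [mul_zero] at hlim
      exact squeeze_zero (fun n => phiNorm_nonneg φ hφpos _) hbound hlim
    | zero =>
      simp only [zero_mul, mul_zero, sub_zero]
      simpa [phiNorm_zero φ hφpos] using tendsto_const_nhds (x := (0:ℝ)) (f := atTop (α := ℕ))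
    | add x y hx hy ihx ihy =>
      have hbound : ∀ n, phiNorm φ ((x + y) * a n - a n * (x + y))
          ≤ phiNorm φ (x * a n - a n * x) + phiNorm φ (y * a n - a n * y) := by
        intro n
        have hid : (x + y) * a n - a n * (x + y)
            = (x * a n - a n * x) + (y * a n - a n * y) := by noncomm_ring
        rw [hid]
        exact phiNorm_add_le φ hφpos _ _
      have hlim := ihx.add ihy
      simp only [add_zero] at hlim
      exact squeeze_zero (fun n => phiNorm_nonneg φ hφpos _) hbound hlim
    | smul c x hx ihx =>
      have hid : ∀ n, (c • x) * a n - a n * (c • x) = c • (x * a n - a n * x) := by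
        intro n
        rw [smul_mul_assoc, mul_smul_comm, smul_sub]
      have heq : ∀ n, phiNorm φ ((c • x) * a n - a n * (c • x))
          = ‖c‖ * phiNorm φ (x * a n - a n * x) := by
        intro n
        rw [hid n, phiNorm_smul φ hφpos]
      have hlim := ihx.const_mul ‖c‖
      simp only [mul_zero] at hlim
      refine Tendsto.congr (fun n => (heq n).symm) hlim
  -- commutation with every x, in norm ‖·‖_φ
  have hcommall : ∀ x : M, Tendsto (fun n => phiNorm φ (x * a n - a n * x)) atTop (nhds 0) := by
    intro x
    rw [Metric.tendsto_atTop]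
    intro ε hε
    obtain ⟨y, hy_span, hy_close⟩ := hdense x (ε / 4) (by linarith)
    obtain ⟨N, hN⟩ := Metric.tendsto_atTop.mp (hspan y hy_span) (ε / 4) (by linarith)
    refine ⟨N, fun n hn => ?_⟩
    have hyn := hN n hn
    rw [Real.dist_eq, sub_zero,
      abs_of_nonneg (phiNorm_nonneg φ hφpos _)] at hyn ⊢
    have hid : x * a n - a n * x
        = ((x - y) * a n - a n * (x - y)) + (y * a n - a n * y) := by noncomm_ring
    have ht1 : phiNorm φ ((x - y) * a n) ≤ ε / 4 := by
      calc phiNorm φ ((x - y) * a n) ≤ ‖a n‖ * phiNorm φ (x - y) :=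
            phiNorm_mul_le_right A habel E hEA hEid hEmod φ hφpos hφE hφ1 hφfaithful
              (x - y) (a n) (hEA (u n))
      _ ≤ 1 * phiNorm φ (x - y) :=
            mul_le_mul_of_nonneg_right (hanorm n) (phiNorm_nonneg φ hφpos _)
      _ ≤ ε / 4 := by rw [one_mul]; exact hy_close.le
    have ht2 : phiNorm φ (a n * (x - y)) ≤ ε / 4 := by
      calc phiNorm φ (a n * (x - y)) ≤ ‖a n‖ * phiNorm φ (x - y) :=
            phiNorm_mul_le_left φ hφpos _ _
      _ ≤ 1 * phiNorm φ (x - y) :=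
            mul_le_mul_of_nonneg_right (hanorm n) (phiNorm_nonneg φ hφpos _)
      _ ≤ ε / 4 := by rw [one_mul]; exact hy_close.le
    calc phiNorm φ (x * a n - a n * x)
        = phiNorm φ (((x - y) * a n - a n * (x - y)) + (y * a n - a n * y)) := by rw [hid]
    _ ≤ phiNorm φ ((x - y) * a n - a n * (x - y)) + phiNorm φ (y * a n - a n * y) :=
        phiNorm_add_le φ hφpos _ _
    _ ≤ (phiNorm φ ((x - y) * a n) + phiNorm φ (a n * (x - y)))
          + phiNorm φ (y * a n - a n * y) := by
        have : phiNorm φ ((x - y) * a n - a n * (x - y))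
            ≤ phiNorm φ ((x - y) * a n) + phiNorm φ (a n * (x - y)) := by
          rw [sub_eq_add_neg]
          calc phiNorm φ ((x - y) * a n + -(a n * (x - y)))
              ≤ phiNorm φ ((x - y) * a n) + phiNorm φ (-(a n * (x - y))) :=
                phiNorm_add_le φ hφpos _ _
          _ = phiNorm φ ((x - y) * a n) + phiNorm φ (a n * (x - y)) := by
              rw [phiNorm_neg φ hφpos]
        linarith
    _ < ε := by linarith
  -- now the ultrafilter argument
  by_contra hcon
  rw [Metric.tendsto_atTop] at hcon
  push_neg at hcon
  obtain ⟨ε, hε, hfreq⟩ := hcon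
  set S : Set ℕ := {n | ε ≤ phiNorm φ (E (u n))} with hS_def
  have hSfreq : ∀ N, ∃ n ≥ N, n ∈ S := by
    intro N
    obtain ⟨n, hn, hd⟩ := hfreq N
    refine ⟨n, hn, ?_⟩
    rw [Real.dist_eq, sub_zero, abs_of_nonneg (phiNorm_nonneg φ hφpos _)] at hd
    exact hd
  have hFne : (atTop ⊓ Filter.principal S).NeBot := by
    rw [inf_principal_neBot_iff]
    intro U hU
    obtain ⟨N, hN⟩ := mem_atTop_sets.mp hU
    obtain ⟨n, hn, hnS⟩ := hSfreq N
    exact ⟨n, hN n hn, hnS⟩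
  set ω : Ultrafilter ℕ := Ultrafilter.of (atTop ⊓ Filter.principal S) with hω_def
  have hωle : (ω : Filter ℕ) ≤ atTop ⊓ Filter.principal S := Ultrafilter.of_le _
  have hωatTop : (ω : Filter ℕ) ≤ atTop := hωle.trans inf_le_left
  have hωS : S ∈ (ω : Filter ℕ) := le_principal_iff.mp (hωle.trans inf_le_right)
  have hωnp : ∀ n : ℕ, (ω : Filter ℕ) ≠ pure n := by
    intro n hn
    have h1 : Set.Ici (n + 1) ∈ (ω : Filter ℕ) := hωatTop (Ici_mem_atTop (n + 1))
    rw [hn, mem_pure, Set.mem_Ici] at h1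
    omega
  obtain ⟨c, hc⟩ := hSE ω hωnp a ⟨1, hanorm⟩ (fun n => hEA (u n))
    (fun x => (hcommall x).mono_left hωatTop)
  -- φ (a n) → 0 along ω
  have hphia : Tendsto (fun n => φ (a n)) (ω : Filter ℕ) (nhds 0) := by
    have h30 := h3 1 1
    simp only [one_mul, mul_one] at h30
    have heq : (fun n => φ (a n)) = fun n => φ (u n) := by
      funext n
      rw [ha_def]
      exact hφE (u n)
    rw [heq]
    exact h30.mono_left hωatTop
  -- φ (a n) → c along ω
  have hphic : Tendsto (fun n => φ (a n)) (ω : Filter ℕ) (nhds c) := by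
    rw [← tendsto_sub_nhds_zero_iff]
    have hbound : ∀ n, ‖φ (a n) - c‖ ≤ phiNorm φ (a n - algebraMap ℂ M c) := by
      intro n
      have he : φ (a n) - c = φ (a n - algebraMap ℂ M c) := by
        rw [map_sub]
        congr 1
        rw [Algebra.algebraMap_eq_smul_one, map_smul, hφ1, smul_eq_mul, mul_one]
      rw [he]
      exact phi_abs_le φ hφpos hφ1 _
    exact squeeze_zero_norm hbound hc
  have hc0 : c = 0 := tendsto_nhds_unique hphic hphia
  rw [hc0] at hc
  simp only [map_zero, sub_zero] at hc
  have hfin : ε ≤ 0 := by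
    refine ge_of_tendsto hc ?_
    exact Filter.eventually_of_mem hωS (fun n hn => hn)
  linarith
end
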